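/- arXiv:1303.7458 — 14 statements merged into one kernel-verified Lean document; each statement's English description precedes it below -/
import Mathlib

section
/- Let R be a commutative ring, M an R-module, and p a prime ideal in sK_R(M). Then there exists a maximal element P of sK_R(M) (with respect to inclusion) such that p ⊆ P. -/
open TensorProduct

/-!
Strong Krull primes are closed under unions of chains: primality passes to a directed union, and
a finitely generated ideal inside the union already lies inside one member of the chain. Zorn's
lemma then gives a maximal strong Krull prime above any given one.
-/

/-- `p` is a strong Krull prime of the `R`-module `M`. -/
def IsStrongKrullPrime (R : Type*) [CommRing R] (M : Type*) [AddCommGroup M] [Module R M]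
    (p : Ideal R) : Prop :=
  p.IsPrime ∧ ∀ I : Ideal R, I.FG → I ≤ p →
    ∃ z : M, I ≤ LinearMap.ker (LinearMap.toSpanSingleton R M z) ∧
      LinearMap.ker (LinearMap.toSpanSingleton R M z) ≤ p

theorem Ideal.isPrime_sSup_of_directedOn {R : Type*} [Semiring R] {s : Set (Ideal R)}
    (hne : s.Nonempty) (hdir : DirectedOn (· ≤ ·) s) (hprime : ∀ p ∈ s, p.IsPrime) :
    (sSup s).IsPrime := by
  have mem_sSup {x : R} : x ∈ sSup s ↔ ∃ p ∈ s, x ∈ p :=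
    Submodule.mem_sSup_of_directed hne hdir
  refine ⟨fun htop => ?_, fun {a b} hab => ?_⟩
  · obtain ⟨p, hps, hp1⟩ := mem_sSup.1 (htop ▸ Submodule.mem_top : (1 : R) ∈ sSup s)
    exact (hprime p hps).ne_top ((Ideal.eq_top_iff_one p).2 hp1)
  · obtain ⟨p, hps, hab⟩ := mem_sSup.1 hab
    exact ((hprime p hps).mem_or_mem hab).imp (fun ha => mem_sSup.2 ⟨p, hps, ha⟩)
      (fun hb => mem_sSup.2 ⟨p, hps, hb⟩)

theorem IsStrongKrullPrime.sSup_of_directedOn {R : Type*} [CommRing R] {M : Type*}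
    [AddCommGroup M] [Module R M] {s : Set (Ideal R)} (hne : s.Nonempty)
    (hdir : DirectedOn (· ≤ ·) s) (hs : ∀ p ∈ s, IsStrongKrullPrime R M p) :
    IsStrongKrullPrime R M (sSup s) := by
  refine ⟨Ideal.isPrime_sSup_of_directedOn hne hdir fun p hp => (hs p hp).1, fun I hI hIs => ?_⟩
  obtain ⟨p, hps, hIp⟩ :=
    (CompleteLattice.isCompactElement_iff_le_of_directed_sSup_le (α := Ideal R) I).1
      ((Submodule.fg_iff_compact I).1 hI) s hne hdir hIs
  obtain ⟨z, hIz, hzp⟩ := (hs p hps).2 I hI hIp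
  exact ⟨z, hIz, hzp.trans (le_sSup hps)⟩

theorem stmt_0 {R : Type*} [CommRing R] {M : Type*} [AddCommGroup M] [Module R M]
    {p : Ideal R} (hp : IsStrongKrullPrime R M p) :
    ∃ P : Ideal R, IsStrongKrullPrime R M P ∧ p ≤ P ∧
      ∀ Q : Ideal R, IsStrongKrullPrime R M Q → P ≤ Q → Q = P := by
  obtain ⟨P, hpP, hP⟩ := zorn_le_nonempty₀ {q : Ideal R | IsStrongKrullPrime R M q}
    (fun c hc hchain q hq => ⟨sSup c,
      IsStrongKrullPrime.sSup_of_directedOn ⟨q, hq⟩ hchain.directedOn hc, fun _ => le_sSup⟩)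
    p hp
  exact ⟨P, hP.prop, hpP, fun Q hQ hPQ => hP.eq_of_ge hQ hPQ⟩
end

section
/- Let R be a commutative ring, M an R-module, and x ∈ M. Then x = 0 if and only if x/1 = 0 in M_p for all p ∈ sK_R(M). -/
/-!
If `x ≠ 0`, its annihilator is proper and so has a minimal prime `p`; since some `s ∉ p`
kills `x` whenever `x/1 = 0` in `M_p`, it suffices that `p` is a strong Krull prime.
Minimality of `p` makes every `a ∈ p` nilpotent on `x` up to a unit of `R_p`
(`s * a ^ n ∈ Ann x` with `s ∉ p`). Pushing `x` by such elements one generator of `I` at a time,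
each time as far as possible while its annihilator stays inside `p`, produces the element `z`
with `I ⊆ Ann z ⊆ p`.
-/

open TensorProduct

theorem Ideal.exists_mul_pow_mem_of_mem_minimalPrimes {R : Type*} [CommSemiring R]
    {I p : Ideal R} (hp : p ∈ I.minimalPrimes) {a : R} (ha : a ∈ p) :
    ∃ (n : ℕ) (s : R), s ∉ p ∧ s * a ^ n ∈ I := by
  have := hp.isPrime
  by_contra! h
  have hdisj : Disjoint (I : Set R) ↑(p.primeCompl ⊔ Submonoid.powers a) := by
    rw [Set.disjoint_left]
    rintro _ hI hT
    obtain ⟨s, hs, _, ⟨n, rfl⟩, rfl⟩ := Submonoid.mem_sup.mp hT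
    exact h n s hs hI
  obtain ⟨q, hq, hIq, hqT⟩ := Ideal.exists_le_prime_disjoint I _ hdisj
  have hqp : q ≤ p := fun b hbq ↦ by_contra fun hbp ↦
    Set.disjoint_left.mp hqT hbq (Submonoid.mem_sup_left hbp)
  exact Set.disjoint_left.mp hqT (hp.2 ⟨hq, hIq⟩ hqp ha)
    (Submonoid.mem_sup_right (Submonoid.mem_powers a))

namespace LinearMap

variable {R M : Type*} [CommRing R] [AddCommGroup M] [Module R M]

theorem ker_toSpanSingleton_le_ker_toSpanSingleton_smul (r : R) (w : M) :
    ker (toSpanSingleton R M w) ≤ ker (toSpanSingleton R M (r • w)) :=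
  fun c (hc : c • w = 0) ↦ show c • r • w = 0 by rw [smul_comm, hc, smul_zero]

theorem exists_smul_smul_eq_zero_and_ker_le {p : Ideal R} [p.IsPrime] {w : M}
    (hw : ker (toSpanSingleton R M w) ≤ p) {a : R}
    (ha : ∃ (n : ℕ) (t : R), t ∉ p ∧ (t * a ^ n) • w = 0) :
    ∃ r : R, a • r • w = 0 ∧ ker (toSpanSingleton R M (r • w)) ≤ p := by
  classical
  set k := Nat.find ha
  obtain ⟨t, ht, htw⟩ : ∃ t, t ∉ p ∧ (t * a ^ k) • w = 0 := Nat.find_spec ha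
  have hk : k ≠ 0 := fun h0 ↦ ht (hw (by simpa [h0] using htw))
  -- the witness is `t * a ^ (k - 1)`, with `k` the least exponent for which some `t ∉ p` works
  refine ⟨t * a ^ (k - 1), ?_,
    fun c (hc : c • (t * a ^ (k - 1)) • w = 0) ↦ by_contra fun hc' ↦ ?_⟩
  · rwa [smul_smul, mul_left_comm, ← pow_succ', Nat.sub_one_add_one hk]
  · rw [smul_smul, ← mul_assoc] at hc
    exact Nat.find_min ha (Nat.sub_one_lt hk)
      ⟨c * t, fun hct ↦ (‹p.IsPrime›.mem_or_mem hct).elim hc' ht, hc⟩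

theorem exists_forall_smul_smul_eq_zero_and_ker_le {p : Ideal R} [p.IsPrime] {z : M}
    (hz : ker (toSpanSingleton R M z) ≤ p) (s : Finset R)
    (hs : ∀ a ∈ s, ∃ (n : ℕ) (t : R), t ∉ p ∧ (t * a ^ n) • z = 0) :
    ∃ r : R, (∀ a ∈ s, a • r • z = 0) ∧ ker (toSpanSingleton R M (r • z)) ≤ p := by
  classical
  induction s using Finset.induction_on with
  | empty => exact ⟨1, by simp, by rwa [one_smul]⟩
  | insert a s _ ih =>
    obtain ⟨r, hr, hrp⟩ := ih fun b hb ↦ hs b (Finset.mem_insert_of_mem hb)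
    obtain ⟨n, t, ht, htz⟩ := hs a (Finset.mem_insert_self a s)
    obtain ⟨r', har', hr'p⟩ := exists_smul_smul_eq_zero_and_ker_le hrp
      ⟨n, t, ht, by rw [smul_comm, htz, smul_zero]⟩
    refine ⟨r' * r, ?_, by rwa [mul_smul]⟩
    simp only [Finset.mem_insert, forall_eq_or_imp, mul_smul]
    exact ⟨har', fun b hb ↦ ker_toSpanSingleton_le_ker_toSpanSingleton_smul r' _ (hr b hb)⟩

end LinearMap

open LinearMap in
theorem isStrongKrullPrime_of_mem_minimalPrimes {R M : Type*} [CommRing R] [AddCommGroup M]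
    [Module R M] {z : M} {p : Ideal R}
    (hp : p ∈ Ideal.minimalPrimes (ker (toSpanSingleton R M z))) :
    IsStrongKrullPrime R M p := by
  have := hp.isPrime
  refine ⟨this, fun I ⟨s, hs⟩ hIp ↦ ?_⟩
  have hsp : ∀ a ∈ s, a ∈ p := fun a ha ↦ hIp (hs ▸ Ideal.subset_span ha)
  obtain ⟨r, hr, hrp⟩ := exists_forall_smul_smul_eq_zero_and_ker_le hp.le s fun a ha ↦
    Ideal.exists_mul_pow_mem_of_mem_minimalPrimes hp (hsp a ha)
  exact ⟨r • z, hs ▸ Ideal.span_le.mpr hr, hrp⟩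

theorem stmt_1 {R : Type*} [CommRing R] {M : Type*} [AddCommGroup M] [Module R M] (x : M) :
    x = 0 ↔ ∀ (p : Ideal R) [p.IsPrime], IsStrongKrullPrime R M p →
      LocalizedModule.mkLinearMap p.primeCompl M x = 0 := by
  refine ⟨fun hx p _ _ ↦ by simp [hx], fun h ↦ by_contra fun hx ↦ ?_⟩
  have hann : LinearMap.ker (LinearMap.toSpanSingleton R M x) ≠ ⊤ :=
    (Ideal.ne_top_iff_one _).mpr (by simpa [LinearMap.mem_ker] using hx)
  obtain ⟨p, hp⟩ := Ideal.nonempty_minimalPrimes hann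
  have := hp.isPrime
  obtain ⟨s, hs⟩ := (IsLocalizedModule.eq_zero_iff p.primeCompl _).mp
    (h p (isStrongKrullPrime_of_mem_minimalPrimes hp))
  exact s.2 (hp.le hs)
end

section
/- Let R be a commutative ring and M an R-module. Then sK_R(M) is nonempty if and only if M ≠ 0. -/
open TensorProduct

/-!
A prime `p` minimal over `Ann(x)` is a strong Krull prime, and such `p` exist once `x ≠ 0`.
For `a ∈ p` some `s a ^ n` with `s ∉ p` kills `x`; taking `n` least and `z = s a ^ (n - 1) x`
gives `a z = 0` while `Ann(z)` is still squeezed between `Ann(x)` and `p`, so `p` stays minimal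
over `Ann(z)`. Iterating over the generators of a finitely generated `I ⊆ p` yields the required
`z`. Conversely, a strong Krull prime applied to `I = 0` produces some `z` with `Ann(z) ≠ R`.
-/

namespace Ideal

variable {R : Type*} [CommSemiring R]

theorem exists_mul_pow_mem_of_mem_minimalPrimes_s2 {J p : Ideal R} (hp : p ∈ J.minimalPrimes)
    {a : R} (ha : a ∈ p) : ∃ s ∉ p, ∃ n : ℕ, s * a ^ n ∈ J := by
  -- otherwise a prime `q ⊇ J` avoiding `(R ∖ p) · aᴺ` would lie strictly below `p`
  by_contra! h
  have := hp.isPrime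
  have hdisj : Disjoint (J : Set R) (p.primeCompl ⊔ Submonoid.powers a : Submonoid R) := by
    refine Set.disjoint_left.mpr fun x hxJ hxS => ?_
    obtain ⟨s, hs, _, ⟨n, rfl⟩, rfl⟩ := Submonoid.mem_sup.mp hxS
    exact h s hs n hxJ
  obtain ⟨q, hq, hJq, hqS⟩ := exists_le_prime_disjoint J _ hdisj
  have hqp : q ≤ p := fun x hxq => by_contra fun hxp =>
    Set.disjoint_left.mp hqS hxq (Submonoid.mem_sup_left hxp)
  exact Set.disjoint_left.mp hqS (hp.2 ⟨hq, hJq⟩ hqp ha)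
    (Submonoid.mem_sup_right (Submonoid.mem_powers a))

theorem mem_minimalPrimes_of_le_of_le {J J' p : Ideal R} (hp : p ∈ J.minimalPrimes)
    (hJJ' : J ≤ J') (hJ'p : J' ≤ p) : p ∈ J'.minimalPrimes :=
  ⟨⟨hp.1.1, hJ'p⟩, fun _ hq hqp => hp.2 ⟨hq.1, hJJ'.trans hq.2⟩ hqp⟩

variable {M : Type*} [AddCommMonoid M] [Module R M]

theorem torsionOf_le_torsionOf_smul (r : R) (x : M) : torsionOf R M x ≤ torsionOf R M (r • x) :=
  fun t ht => by rw [mem_torsionOf_iff] at ht ⊢; rw [smul_comm, ht, smul_zero]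

theorem exists_smul_mem_minimalPrimes_torsionOf {x : M} {p : Ideal R}
    (hp : p ∈ (torsionOf R M x).minimalPrimes) {a : R} (ha : a ∈ p) :
    ∃ r : R, a ∈ torsionOf R M (r • x) ∧ p ∈ (torsionOf R M (r • x)).minimalPrimes := by
  classical
  have hex : ∃ n : ℕ, ∃ s ∉ p, (s * a ^ n) • x = 0 := by
    obtain ⟨s, hs, n, hn⟩ := exists_mul_pow_mem_of_mem_minimalPrimes_s2 hp ha
    exact ⟨n, s, hs, (mem_torsionOf_iff x _).mp hn⟩
  obtain ⟨s, hs, hsx⟩ := Nat.find_spec hex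
  have hpos : Nat.find hex ≠ 0 := fun h0 => by
    rw [h0, pow_zero, mul_one] at hsx
    exact hs (hp.le hsx)
  have hsucc : Nat.find hex - 1 + 1 = Nat.find hex := Nat.sub_add_cancel (Nat.pos_of_ne_zero hpos)
  refine ⟨s * a ^ (Nat.find hex - 1), ?_, mem_minimalPrimes_of_le_of_le hp
    (torsionOf_le_torsionOf_smul _ x) fun t ht => by_contra fun htp => ?_⟩
  · rw [mem_torsionOf_iff, smul_smul, mul_left_comm, ← pow_succ', hsucc]
    exact hsx
  · rw [mem_torsionOf_iff, smul_smul, ← mul_assoc] at ht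
    -- `t s ∉ p` would kill `a ^ (n - 1) x` for the least admissible `n`
    exact Nat.find_min hex (Nat.sub_one_lt hpos)
      ⟨t * s, fun hts => (hp.isPrime.mem_or_mem hts).elim htp hs, ht⟩

theorem exists_mem_minimalPrimes_torsionOf_of_subset {x : M} {p : Ideal R}
    (hp : p ∈ (torsionOf R M x).minimalPrimes) (s : Finset R) (hs : (s : Set R) ⊆ p) :
    ∃ z : M, (s : Set R) ⊆ torsionOf R M z ∧ p ∈ (torsionOf R M z).minimalPrimes := by
  classical
  induction s using Finset.induction_on with
  | empty => exact ⟨x, by simp, hp⟩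
  | insert a s _ ih =>
    rw [Finset.coe_insert, Set.insert_subset_iff] at hs
    obtain ⟨z, hsz, hpz⟩ := ih hs.2
    obtain ⟨r, haz, hprz⟩ := exists_smul_mem_minimalPrimes_torsionOf hpz hs.1
    refine ⟨r • z, ?_, hprz⟩
    rw [Finset.coe_insert, Set.insert_subset_iff]
    exact ⟨haz, hsz.trans (torsionOf_le_torsionOf_smul r z)⟩

end Ideal

section

variable {R : Type*} [CommRing R] {M : Type*} [AddCommGroup M] [Module R M]

theorem isStrongKrullPrime_iff {p : Ideal R} :
    IsStrongKrullPrime R M p ↔ p.IsPrime ∧ ∀ I : Ideal R, I.FG → I ≤ p →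
      ∃ z : M, I ≤ Ideal.torsionOf R M z ∧ Ideal.torsionOf R M z ≤ p :=
  Iff.rfl

theorem IsStrongKrullPrime.of_mem_minimalPrimes_torsionOf {x : M} {p : Ideal R}
    (hp : p ∈ (Ideal.torsionOf R M x).minimalPrimes) : IsStrongKrullPrime R M p := by
  refine isStrongKrullPrime_iff.mpr ⟨hp.isPrime, fun I ⟨s, hsI⟩ hIp => ?_⟩
  subst hsI
  obtain ⟨z, hsz, hpz⟩ :=
    Ideal.exists_mem_minimalPrimes_torsionOf_of_subset hp s (Ideal.span_le.mp hIp)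
  exact ⟨z, Ideal.span_le.mpr hsz, hpz.le⟩

theorem IsStrongKrullPrime.exists_ne_zero {p : Ideal R} (hp : IsStrongKrullPrime R M p) :
    ∃ x : M, x ≠ 0 := by
  obtain ⟨hprime, h⟩ := isStrongKrullPrime_iff.mp hp
  obtain ⟨z, -, hzp⟩ := h ⊥ Submodule.fg_bot bot_le
  refine ⟨z, fun hz => hprime.ne_top (top_le_iff.mp ?_)⟩
  rwa [hz, Ideal.torsionOf_zero] at hzp

end

theorem stmt_2 {R : Type*} [CommRing R] {M : Type*} [AddCommGroup M] [Module R M] :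
    (∃ p : Ideal R, IsStrongKrullPrime R M p) ↔ ∃ x : M, x ≠ 0 := by
  refine ⟨fun ⟨p, hp⟩ => hp.exists_ne_zero, fun ⟨x, hx⟩ => ?_⟩
  obtain ⟨p, hp⟩ :=
    Ideal.nonempty_minimalPrimes (mt (Ideal.torsionOf_eq_top_iff (R := R) x).mp hx)
  exact ⟨p, .of_mem_minimalPrimes_torsionOf hp⟩
end

section
/- Let R be a commutative ring, p a prime ideal, and M an R-module. Then p ∈ sK_R(M) if and only if pR_p ∈ sK_{R_p}(M_p). -/
/-! Annihilators of elements localize, `Ann_{R_S}(m/s) = Ann_R(m) R_S`, and every finitely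
generated ideal of `R_S` is extended from a finitely generated ideal of `R`; this gives the forward
direction. Conversely, if `I R_S ⊆ Ann_R(m) R_S` with `I` finitely generated, one `t ∈ S` clears
the denominators of all generators at once, so `I ⊆ Ann_R(t m)`, and `Ann_R(t m)` stays inside
the prime `p` because `t ∉ p`. -/

open TensorProduct

open LinearMap

lemma LinearMap.ker_toSpanSingleton_smul_le {R M : Type*} [CommRing R] [AddCommGroup M]
    [Module R M] {p : Ideal R} [p.IsPrime] {m : M} {t : R} (ht : t ∉ p)
    (h : ker (toSpanSingleton R M m) ≤ p) : ker (toSpanSingleton R M (t • m)) ≤ p := by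
  intro b hb
  have hbt : b * t ∈ p := h (by simpa [mul_smul] using hb)
  exact (Ideal.IsPrime.mem_or_mem ‹_› hbt).resolve_right ht

namespace IsLocalization

variable {R : Type*} [CommRing R] {R' : Type*} [CommRing R'] [Algebra R R']

lemma exists_fg_map_eq_of_fg (S : Submonoid R) [IsLocalization S R'] {J : Ideal R'} (hJ : J.FG) :
    ∃ I : Ideal R, I.FG ∧ I.map (algebraMap R R') = J := by
  induction J, hJ using Submodule.fg_induction with
  | singleton x =>
    obtain ⟨⟨a, t⟩, hx⟩ := IsLocalization.surj S x
    refine ⟨Ideal.span {a}, Submodule.fg_span_singleton a, ?_⟩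
    rw [Ideal.map_span, Set.image_singleton, ← hx,
      Ideal.span_singleton_mul_right_unit (IsLocalization.map_units R' t)]
  | sup J₁ J₂ _ _ ih₁ ih₂ =>
    obtain ⟨I₁, hI₁, rfl⟩ := ih₁
    obtain ⟨I₂, hI₂, rfl⟩ := ih₂
    exact ⟨I₁ ⊔ I₂, Submodule.FG.sup hI₁ hI₂, Ideal.map_sup _ _ _⟩

lemma exists_mul_mem_of_map_le_map (S : Submonoid R) [IsLocalization S R'] {I J : Ideal R}
    (hI : I.FG) (h : I.map (algebraMap R R') ≤ J.map (algebraMap R R')) :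
    ∃ s : S, ∀ b ∈ I, (s : R) * b ∈ J := by
  induction I, hI using Submodule.fg_induction with
  | singleton x =>
    obtain ⟨s, hs⟩ := (IsLocalization.algebraMap_mem_map_algebraMap_iff S R' J x).1
      (h (Ideal.mem_map_of_mem _ (Submodule.mem_span_singleton_self x)))
    refine ⟨⟨s, hs.1⟩, fun b hb => ?_⟩
    obtain ⟨c, rfl⟩ := Submodule.mem_span_singleton.1 hb
    simpa [mul_left_comm] using J.mul_mem_left c hs.2
  | sup I₁ I₂ _ _ ih₁ ih₂ =>
    obtain ⟨s₁, hs₁⟩ := ih₁ (le_trans (Ideal.map_mono le_sup_left) h)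
    obtain ⟨s₂, hs₂⟩ := ih₂ (le_trans (Ideal.map_mono le_sup_right) h)
    refine ⟨s₁ * s₂, fun b hb => ?_⟩
    obtain ⟨b₁, hb₁, b₂, hb₂, rfl⟩ := Submodule.mem_sup.1 hb
    have hsplit : ((s₁ * s₂ : S) : R) * (b₁ + b₂) = s₂ * (s₁ * b₁) + s₁ * (s₂ * b₂) := by
      push_cast; ring
    rw [hsplit]
    exact J.add_mem (J.mul_mem_left _ (hs₁ b₁ hb₁)) (J.mul_mem_left _ (hs₂ b₂ hb₂))

end IsLocalization

section Localization

variable {R : Type*} [CommRing R] (S : Submonoid R) {R' : Type*} [CommRing R'] [Algebra R R']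
  [IsLocalization S R'] {M M' : Type*} [AddCommGroup M] [Module R M] [AddCommGroup M']
  [Module R M'] [Module R' M'] [IsScalarTower R R' M']

lemma IsLocalizedModule.ker_toSpanSingleton_mk' (f : M →ₗ[R] M') [IsLocalizedModule S f] (m : M) (s : S) :
    ker (toSpanSingleton R' M' (IsLocalizedModule.mk' f m s)) =
      Ideal.map (algebraMap R R') (ker (toSpanSingleton R M m)) := by
  ext x
  obtain ⟨r, t, rfl⟩ := IsLocalization.mk'_surjective S x
  simp only [mem_ker, toSpanSingleton_apply, IsLocalizedModule.mk'_smul_mk',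
    IsLocalizedModule.mk'_eq_zero', IsLocalization.mk'_mem_map_algebraMap_iff, Subtype.exists,
    Submonoid.mk_smul, exists_prop, mul_smul]

theorem isStrongKrullPrime_iff_map (f : M →ₗ[R] M') [IsLocalizedModule S f] {p : Ideal R}
    [p.IsPrime] (hp : Disjoint (S : Set R) p) :
    IsStrongKrullPrime R M p ↔ IsStrongKrullPrime R' M' (p.map (algebraMap R R')) := by
  have hcomap : (p.map (algebraMap R R')).comap (algebraMap R R') = p :=
    IsLocalization.under_map_of_isPrime_disjoint S R' ‹_› hp
  constructor
  · rintro ⟨-, h⟩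
    refine ⟨IsLocalization.isPrime_of_isPrime_disjoint S R' p ‹_› hp, fun J hJ hJp => ?_⟩
    obtain ⟨I, hI, rfl⟩ := IsLocalization.exists_fg_map_eq_of_fg S hJ
    obtain ⟨z, hIz, hzp⟩ := h I hI (hcomap ▸ Ideal.map_le_iff_le_comap.1 hJp)
    refine ⟨f z, ?_⟩
    rw [← IsLocalizedModule.mk'_one S, IsLocalizedModule.ker_toSpanSingleton_mk' S f]
    exact ⟨Ideal.map_mono hIz, Ideal.map_mono hzp⟩
  · rintro ⟨-, h⟩
    refine ⟨‹_›, fun I hI hIp => ?_⟩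
    obtain ⟨z, hIz, hzp⟩ := h (I.map (algebraMap R R')) (hI.map _) (Ideal.map_mono hIp)
    obtain ⟨⟨m, s⟩, rfl⟩ := IsLocalizedModule.mk'_surjective S f z
    rw [Function.uncurry_apply_pair, IsLocalizedModule.ker_toSpanSingleton_mk' S f] at hIz hzp
    obtain ⟨t, ht⟩ := IsLocalization.exists_mul_mem_of_map_le_map S hI hIz
    refine ⟨(t : R) • m, fun b hb => ?_,
      ker_toSpanSingleton_smul_le (hp.notMem_of_mem_left t.2) ?_⟩
    · simpa [mul_smul, mul_comm] using ht b hb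
    · exact hcomap ▸ (Ideal.le_comap_map.trans (Ideal.comap_mono hzp))

end Localization

theorem stmt_4 {R : Type*} [CommRing R] {M : Type*} [AddCommGroup M] [Module R M]
    (p : Ideal R) [p.IsPrime] :
    IsStrongKrullPrime R M p ↔
      IsStrongKrullPrime (Localization p.primeCompl) (LocalizedModule p.primeCompl M)
        (p.map (algebraMap R (Localization p.primeCompl))) :=
  isStrongKrullPrime_iff_map p.primeCompl (LocalizedModule.mkLinearMap p.primeCompl M)
    disjoint_compl_left
end

section
/- Let (R,m) be a commutative local ring, M a flat R-module, and L an R-module. If m ∈ sK_R(L ⊗_R M), then m ∈ sK_R(L). If M is moreover faithfully flat, then m ∈ sK_R(L) implies m ∈ sK_R(L ⊗_R M). -/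
open TensorProduct

/-! In a local ring `ker (r ↦ r • z) ≤ 𝔪` just says `z ≠ 0`, so `𝔪 ∈ sK(N)` means that every
finitely generated `I = (a₁, …, aₙ) ≤ 𝔪` kills a nonzero element of `N`. The elements of `L` killed
by `I` form the kernel of `x ↦ (aᵢ • x)ᵢ : L → Lⁿ`, and a flat `M` carries this kernel to the
corresponding kernel in `L ⊗ M`; so a nonzero element of `L ⊗ M` killed by `I` forces one in `L`.
Conversely, if `M` is faithfully flat and `z ≠ 0` then `z ⊗ m ≠ 0` for some `m`, and `I` kills
`z ⊗ m` whenever it kills `z`. -/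

open LinearMap IsLocalRing

section

variable {R : Type*} [CommRing R] {M L : Type*} [AddCommGroup M] [Module R M]
  [AddCommGroup L] [Module R L]

theorem ker_toSpanSingleton_le_maximalIdeal_iff [IsLocalRing R] {z : L} :
    ker (toSpanSingleton R L z) ≤ maximalIdeal R ↔ z ≠ 0 := by
  rw [ne_eq, ← toSpanSingleton_eq_zero_iff R L, ← ker_eq_top]
  exact ⟨fun h => ne_top_of_le_ne_top (maximalIdeal.isMaximal R).ne_top h, le_maximalIdeal⟩

theorem isStrongKrullPrime_maximalIdeal_iff [IsLocalRing R] :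
    IsStrongKrullPrime R L (maximalIdeal R) ↔ ∀ I : Ideal R, I.FG → I ≤ maximalIdeal R →
      ∃ z : L, z ≠ 0 ∧ I ≤ ker (toSpanSingleton R L z) := by
  simp only [IsStrongKrullPrime, ker_toSpanSingleton_le_maximalIdeal_iff, and_comm (a := _ ≤ _)]
  exact and_iff_right inferInstance

theorem Module.Flat.exists_ne_zero_forall_apply_eq_zero [Module.Flat R M] {ι : Type*} [Fintype ι]
    [DecidableEq ι] {N : ι → Type*} [∀ i, AddCommGroup (N i)] [∀ i, Module R (N i)]
    (f : ∀ i, L →ₗ[R] N i) {t : L ⊗[R] M} (ht : t ≠ 0) (hft : ∀ i, (f i).rTensor M t = 0) :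
    ∃ z : L, z ≠ 0 ∧ ∀ i, f i z = 0 := by
  by_contra! h
  have hinj : Function.Injective (pi f) := by
    refine (injective_iff_map_eq_zero _).mpr fun z hz => ?_
    by_contra hz0
    obtain ⟨i, hi⟩ := h z hz0
    exact hi (congrFun hz i)
  have hpi : (piLeft R M N).toLinearMap ∘ₗ (pi f).rTensor M = pi fun i => (f i).rTensor M := by
    ext; simp
  refine ht ((piLeft R M N).injective.comp
    (Module.Flat.rTensor_preserves_injective_linearMap _ hinj) ?_)
  rw [Function.comp_apply, Function.comp_apply, map_zero, map_zero, ← LinearEquiv.coe_coe,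
    ← LinearMap.comp_apply, hpi]
  exact funext hft

theorem Module.Flat.exists_ne_zero_le_ker_toSpanSingleton [Module.Flat R M] {I : Ideal R}
    (hI : I.FG) {t : L ⊗[R] M} (ht : t ≠ 0) (hIt : I ≤ ker (toSpanSingleton R _ t)) :
    ∃ z : L, z ≠ 0 ∧ I ≤ ker (toSpanSingleton R L z) := by
  classical
  obtain ⟨S, rfl⟩ := hI
  obtain ⟨z, hz, hSz⟩ := exists_ne_zero_forall_apply_eq_zero (M := M)
    (fun a : S => (a : R) • LinearMap.id) ht fun a => by
      simpa [rTensor_smul, rTensor_id] using hIt (Ideal.subset_span a.2)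
  exact ⟨z, hz, Ideal.span_le.mpr fun a ha => by simpa using hSz ⟨a, ha⟩⟩

theorem Module.FaithfullyFlat.exists_tmul_ne_zero [Module.FaithfullyFlat R M] {z : L}
    (hz : z ≠ 0) : ∃ m : M, z ⊗ₜ[R] m ≠ 0 := by
  by_contra! h
  refine hz ?_
  have : (toSpanSingleton R L z).rTensor M = 0 := by ext m; simpa using h m
  simpa using congr($((zero_iff_rTensor_zero R M _).mpr this) 1)

theorem ker_toSpanSingleton_le_ker_toSpanSingleton_tmul (z : L) (m : M) :
    ker (toSpanSingleton R L z) ≤ ker (toSpanSingleton R (L ⊗[R] M) (z ⊗ₜ m)) := by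
  intro a ha
  simp only [mem_ker, toSpanSingleton_apply] at ha ⊢
  rw [smul_tmul', ha, zero_tmul]

end

theorem stmt_6 {R : Type*} [CommRing R] [IsLocalRing R]
    {M : Type*} [AddCommGroup M] [Module R M] [Module.Flat R M]
    {L : Type*} [AddCommGroup L] [Module R L] :
    (IsStrongKrullPrime R (L ⊗[R] M) (IsLocalRing.maximalIdeal R) →
      IsStrongKrullPrime R L (IsLocalRing.maximalIdeal R)) ∧
    (Module.FaithfullyFlat R M →
      IsStrongKrullPrime R L (IsLocalRing.maximalIdeal R) →
        IsStrongKrullPrime R (L ⊗[R] M) (IsLocalRing.maximalIdeal R)) := by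
  simp only [isStrongKrullPrime_maximalIdeal_iff]
  refine ⟨fun h I hI hIm => ?_, fun _ h I hI hIm => ?_⟩
  · obtain ⟨t, ht, hIt⟩ := h I hI hIm
    exact Module.Flat.exists_ne_zero_le_ker_toSpanSingleton hI ht hIt
  · obtain ⟨z, hz, hIz⟩ := h I hI hIm
    obtain ⟨m, hm⟩ := Module.FaithfullyFlat.exists_tmul_ne_zero (R := R) (M := M) hz
    exact ⟨z ⊗ₜ m, hm, hIz.trans (ker_toSpanSingleton_le_ker_toSpanSingleton_tmul z m)⟩
end

section
/- Let R be a commutative ring and M a flat R-module. If M ⊗_R Q is flat over the total quotient ring Q of R and sK_R(L ⊗_R M) ⊆ sK_R(L) for every R-module L, then for every torsion-free R-module L, the module L ⊗_R M is torsion-free. -/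
/-!
A torsion-free module `L` embeds into `Q ⊗[R] L`, where `Q` is the total quotient ring. Tensoring
with the flat module `M` keeps this map injective, and its target `(Q ⊗[R] L) ⊗[R] M` is a
`Q`-module, on which every `R`-regular element acts invertibly.
-/

open TensorProduct

/-- A module is torsion-free if every `R`-regular element acts injectively. -/
def TorsionFree (R : Type*) [CommRing R] (M : Type*) [AddCommGroup M] [Module R M] : Prop :=
  ∀ r ∈ nonZeroDivisors R, ∀ x : M, r • x = 0 → x = 0

namespace TorsionFree

variable {R : Type*} [CommRing R] {N P : Type*} [AddCommGroup N] [Module R N]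
  [AddCommGroup P] [Module R P]
  (Q : Type*) [CommRing Q] [Algebra R Q] [IsLocalization (nonZeroDivisors R) Q]

theorem of_injective {f : N →ₗ[R] P} (hf : Function.Injective f) (hP : TorsionFree R P) :
    TorsionFree R N := fun r hr x hx ↦
  hf <| by rw [map_zero]; exact hP r hr (f x) (by rw [← map_smul, hx, map_zero])

theorem of_isLocalization [Module Q P] [IsScalarTower R Q P] : TorsionFree R P := by
  intro r hr x hx
  have hunit : IsUnit (algebraMap R Q r) := IsLocalization.map_units Q ⟨r, hr⟩
  rw [← algebraMap_smul Q] at hx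
  exact hunit.smul_left_cancel.mp (hx.trans (smul_zero _).symm)

theorem injective_mk_one (hN : TorsionFree R N) :
    Function.Injective (TensorProduct.mk R Q N 1) := by
  have hloc : IsLocalizedModule (nonZeroDivisors R) (TensorProduct.mk R Q N 1) :=
    (isLocalizedModule_iff_isBaseChange _ Q _).mpr (TensorProduct.isBaseChange R N Q)
  refine (injective_iff_map_eq_zero _).mpr fun x hx ↦ ?_
  obtain ⟨s, hs⟩ := (IsLocalizedModule.eq_zero_iff (nonZeroDivisors R) _).mp hx
  exact hN s s.2 x hs

theorem rTensor_of_flat {M : Type*} [AddCommGroup M] [Module R M] [Module.Flat R M]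
    (hN : TorsionFree R N) : TorsionFree R (N ⊗[R] M) :=
  of_injective (P := (FractionRing R ⊗[R] N) ⊗[R] M)
    (Module.Flat.rTensor_preserves_injective_linearMap _ (hN.injective_mk_one (FractionRing R)))
    (of_isLocalization (FractionRing R))

end TorsionFree

universe u

theorem stmt_8_general {R : Type u} [CommRing R] {M : Type u} [AddCommGroup M] [Module R M]
    [Module.Flat R M]
    (L : Type u) [AddCommGroup L] [Module R L] (hL : TorsionFree R L) :
    TorsionFree R (L ⊗[R] M) :=
  hL.rTensor_of_flat

theorem stmt_8 {R : Type u} [CommRing R] {M : Type u} [AddCommGroup M] [Module R M]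
    [Module.Flat R M]
    (hQ : Module.Flat (FractionRing R) (FractionRing R ⊗[R] M))
    (hsk : ∀ (L : Type u) [AddCommGroup L] [Module R L] (p : Ideal R),
      IsStrongKrullPrime R (L ⊗[R] M) p → IsStrongKrullPrime R L p)
    (L : Type u) [AddCommGroup L] [Module R L] (hL : TorsionFree R L) :
    TorsionFree R (L ⊗[R] M) :=
  stmt_8_general L hL
end

section
/- Let R be a commutative ring and M an R-module such that Tor_1^R(R/I, M) is torsion-free for every finitely generated ideal I of R, and M ⊗_R Q is flat over the total quotient ring Q of R. Then M is flat. -/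
open TensorProduct

open CategoryTheory

universe u

/-!
By the ideal criterion, `M` is flat once the kernel `K` of `I ⊗ M → M` vanishes for every finitely
generated ideal `I`. Take a projective resolution `P₂ → P₁ → P₀ → M` with differential `d`, and let
`Z = {x ∈ P₁ | d x ∈ I P₀}`. Reducing modulo `I` identifies `Tor₁(R/I, M)`, the homology of
`R/I ⊗ P`, with `Z / (d P₂ + I P₁)`. Since `P₀` is flat, `I ⊗ P₀ ≅ I P₀`, and lifting `d x` along
this isomorphism identifies `K` with `Z / (ker d + I P₁)`, the same quotient by exactness. Hence
`K` is torsion-free. On the other hand `Q ⊗ M` is flat over `Q`, hence over `R`, so `K` dies after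
localizing at the nonzerodivisors: each element of `K` is killed by a nonzerodivisor, so `K = 0`.
-/

namespace Ideal

variable {R : Type*} [CommRing R] (I : Ideal R) (N : Type*) [AddCommGroup N] [Module R N]

noncomputable def tensorSMul : I ⊗[R] N →ₗ[R] N :=
  (TensorProduct.lid R N).toLinearMap ∘ₗ LinearMap.rTensor N I.subtype

variable {N} {N' : Type*} [AddCommGroup N'] [Module R N']

@[simp]
lemma tensorSMul_tmul (a : I) (n : N) : I.tensorSMul N (a ⊗ₜ n) = (a : R) • n := rfl

lemma ker_tensorSMul :
    LinearMap.ker (I.tensorSMul N) = LinearMap.ker (LinearMap.rTensor N I.subtype) :=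
  LinearEquiv.ker_comp _ _

lemma range_tensorSMul : LinearMap.range (I.tensorSMul N) = I • (⊤ : Submodule R N) := by
  refine le_antisymm ?_ ?_
  · rintro _ ⟨x, rfl⟩
    induction x using TensorProduct.induction_on with
    | zero => simp
    | tmul a n => exact Submodule.smul_mem_smul a.2 Submodule.mem_top
    | add x y hx hy => rw [map_add]; exact add_mem hx hy
  · rw [Submodule.smul_le]
    exact fun a ha n _ ↦ ⟨⟨a, ha⟩ ⊗ₜ n, rfl⟩

lemma tensorSMul_comp_lTensor (f : N →ₗ[R] N') :
    I.tensorSMul N' ∘ₗ f.lTensor I = f ∘ₗ I.tensorSMul N :=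
  TensorProduct.ext' fun a n ↦ by simp

lemma tensorSMul_injective [Module.Flat R N] : Function.Injective (I.tensorSMul N) :=
  (TensorProduct.lid R N).injective.comp (Module.Flat.iff_rTensor_injective'.mp ‹_› I)

variable (N) in
noncomputable def tensorSMulEquiv [Module.Flat R N] :
    I ⊗[R] N ≃ₗ[R] (I • ⊤ : Submodule R N) :=
  (LinearEquiv.ofInjective _ I.tensorSMul_injective).trans
    (LinearEquiv.ofEq _ _ I.range_tensorSMul)

lemma tensorSMulEquiv_symm_eq [Module.Flat R N] {y : (I • ⊤ : Submodule R N)} {u : I ⊗[R] N}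
    (hu : I.tensorSMul N u = y) : (I.tensorSMulEquiv N).symm y = u :=
  (LinearEquiv.symm_apply_eq _).mpr (Subtype.ext hu.symm)

end Ideal

section Presentation

variable {R : Type*} [CommRing R] (I : Ideal R)
variable {M P₀ P₁ : Type*} [AddCommGroup M] [Module R M] [AddCommGroup P₀] [Module R P₀]
  [AddCommGroup P₁] [Module R P₁] [Module.Flat R P₀] (d : P₁ →ₗ[R] P₀) (ε : P₀ →ₗ[R] M)

noncomputable def Ideal.cycleToTensor : (I • ⊤ : Submodule R P₀).comap d →ₗ[R] I ⊗[R] M :=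
  ε.lTensor I ∘ₗ (I.tensorSMulEquiv P₀).symm.toLinearMap ∘ₗ d.restrict fun _ hx ↦ hx

variable {I d ε}

lemma Ideal.cycleToTensor_eq {x : (I • ⊤ : Submodule R P₀).comap d} {u : I ⊗[R] P₀}
    (hu : I.tensorSMul P₀ u = d x) : I.cycleToTensor d ε x = ε.lTensor I u := by
  simp only [Ideal.cycleToTensor, LinearMap.comp_apply, LinearEquiv.coe_coe]
  rw [I.tensorSMulEquiv_symm_eq hu]

variable (hε : Function.Surjective ε) (hdε : Function.Exact d ε)
include hε hdε

lemma Ideal.range_cycleToTensor :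
    LinearMap.range (I.cycleToTensor d ε) = LinearMap.ker (I.tensorSMul M) := by
  refine le_antisymm ?_ fun k hk ↦ ?_
  · rintro _ ⟨x, rfl⟩
    obtain ⟨u, hu⟩ : d x ∈ LinearMap.range (I.tensorSMul P₀) := by
      rw [I.range_tensorSMul]; exact x.2
    rw [LinearMap.mem_ker, Ideal.cycleToTensor_eq hu, ← LinearMap.comp_apply,
      I.tensorSMul_comp_lTensor, LinearMap.comp_apply, hu]
    exact hdε.apply_apply_eq_zero _
  · obtain ⟨u, rfl⟩ := LinearMap.lTensor_surjective I hε k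
    have hu : ε (I.tensorSMul P₀ u) = 0 := by
      rwa [← LinearMap.comp_apply, ← I.tensorSMul_comp_lTensor]
    obtain ⟨x, hx⟩ := (hdε _).mp hu
    have hxZ : x ∈ (I • ⊤ : Submodule R P₀).comap d := by
      rw [Submodule.mem_comap, hx, ← I.range_tensorSMul]
      exact LinearMap.mem_range_self _ u
    exact ⟨⟨x, hxZ⟩, Ideal.cycleToTensor_eq hx.symm⟩

lemma Ideal.ker_cycleToTensor :
    LinearMap.ker (I.cycleToTensor d ε) =
      (LinearMap.ker d ⊔ I • ⊤).comap ((I • ⊤ : Submodule R P₀).comap d).subtype := by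
  ext x
  obtain ⟨u, hu⟩ : d x ∈ LinearMap.range (I.tensorSMul P₀) := by
    rw [I.range_tensorSMul]; exact x.2
  have hd_tensorSMul (v : I ⊗[R] P₁) : I.tensorSMul P₀ (d.lTensor I v) = d (I.tensorSMul P₁ v) :=
    LinearMap.congr_fun (I.tensorSMul_comp_lTensor d) v
  rw [LinearMap.mem_ker, Ideal.cycleToTensor_eq hu, Submodule.mem_comap, Submodule.subtype_apply,
    Submodule.mem_sup]
  constructor
  · intro h
    obtain ⟨v, rfl⟩ := (lTensor_exact I hdε hε u).mp h
    refine ⟨x - I.tensorSMul P₁ v, ?_, I.tensorSMul P₁ v, ?_, sub_add_cancel _ _⟩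
    · rw [LinearMap.mem_ker, map_sub, ← hd_tensorSMul, hu, sub_self]
    · rw [← I.range_tensorSMul]
      exact LinearMap.mem_range_self _ v
  · rintro ⟨a, ha, b, hb, hab⟩
    rw [← I.range_tensorSMul] at hb
    obtain ⟨v, rfl⟩ := hb
    have huv : u = d.lTensor I v := I.tensorSMul_injective <| by
      rw [hu, hd_tensorSMul, ← hab, map_add, LinearMap.mem_ker.mp ha, zero_add]
    rw [huv, ← LinearMap.comp_apply, ← LinearMap.lTensor_comp, hdε.linearMap_comp_eq_zero,
      LinearMap.lTensor_zero, LinearMap.zero_apply]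

end Presentation

section QuotTensor

variable {R : Type*} [CommRing R] (I : Ideal R)
variable {N N' : Type*} [AddCommGroup N] [Module R N] [AddCommGroup N'] [Module R N']

lemma TensorProduct.quotTensorEquivQuotSMul_lTensor (f : N →ₗ[R] N') (z : (R ⧸ I) ⊗[R] N) :
    quotTensorEquivQuotSMul N' I (f.lTensor (R ⧸ I) z) =
      Submodule.mapQ _ _ f (Submodule.smul_top_le_comap_smul_top I f)
        (quotTensorEquivQuotSMul N I z) := by
  induction z using TensorProduct.induction_on with
  | zero => simp
  | tmul a n =>
    obtain ⟨r, rfl⟩ := Ideal.Quotient.mk_surjective a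
    simp [quotTensorEquivQuotSMul_mk_tmul]
  | add x y hx hy => simp only [map_add, hx, hy]

lemma TensorProduct.quotTensorEquivQuotSMul_symm_mem_ker_lTensor (f : N →ₗ[R] N')
    (y : N ⧸ (I • ⊤ : Submodule R N)) :
    (quotTensorEquivQuotSMul N I).symm y ∈ LinearMap.ker (f.lTensor (R ⧸ I)) ↔
      y ∈ LinearMap.ker (Submodule.mapQ _ _ f (Submodule.smul_top_le_comap_smul_top I f)) := by
  rw [LinearMap.mem_ker, LinearMap.mem_ker, ← (quotTensorEquivQuotSMul N' I).map_eq_zero_iff,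
    quotTensorEquivQuotSMul_lTensor, LinearEquiv.apply_symm_apply]

lemma TensorProduct.quotTensorEquivQuotSMul_symm_mem_range_lTensor (f : N →ₗ[R] N')
    (y : N' ⧸ (I • ⊤ : Submodule R N')) :
    (quotTensorEquivQuotSMul N' I).symm y ∈ LinearMap.range (f.lTensor (R ⧸ I)) ↔
      y ∈ LinearMap.range (Submodule.mapQ _ _ f (Submodule.smul_top_le_comap_smul_top I f)) := by
  constructor
  · rintro ⟨w, hw⟩
    exact ⟨quotTensorEquivQuotSMul N I w, by
      rw [← quotTensorEquivQuotSMul_lTensor, hw, LinearEquiv.apply_symm_apply]⟩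
  · rintro ⟨q, rfl⟩
    refine ⟨(quotTensorEquivQuotSMul N I).symm q, ?_⟩
    rw [LinearEquiv.eq_symm_apply, quotTensorEquivQuotSMul_lTensor, LinearEquiv.apply_symm_apply]

variable {P₀ P₁ P₂ : Type*} [AddCommGroup P₀] [Module R P₀] [AddCommGroup P₁] [Module R P₁]
  [AddCommGroup P₂] [Module R P₂] (d : P₁ →ₗ[R] P₀)

lemma TensorProduct.quotTensorEquivQuotSMul_symm_mk_mem_ker_lTensor {x : P₁} :
    (quotTensorEquivQuotSMul P₁ I).symm (Submodule.Quotient.mk x) ∈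
        LinearMap.ker (d.lTensor (R ⧸ I)) ↔ x ∈ (I • ⊤ : Submodule R P₀).comap d := by
  rw [quotTensorEquivQuotSMul_symm_mem_ker_lTensor, LinearMap.mem_ker, Submodule.mapQ_apply,
    Submodule.Quotient.mk_eq_zero, Submodule.mem_comap]

noncomputable def Ideal.cycleToQuotTensor :
    (I • ⊤ : Submodule R P₀).comap d →ₗ[R] LinearMap.ker (d.lTensor (R ⧸ I)) :=
  LinearMap.codRestrict _ ((quotTensorEquivQuotSMul P₁ I).symm.toLinearMap ∘ₗ
    (I • ⊤ : Submodule R P₁).mkQ ∘ₗ Submodule.subtype _) fun x ↦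
      (quotTensorEquivQuotSMul_symm_mk_mem_ker_lTensor I d).mpr x.2

lemma Ideal.cycleToQuotTensor_surjective : Function.Surjective (I.cycleToQuotTensor d) := by
  rintro ⟨z, hz⟩
  obtain ⟨x, hx⟩ := Submodule.Quotient.mk_surjective _ (quotTensorEquivQuotSMul P₁ I z)
  have hz' : (quotTensorEquivQuotSMul P₁ I).symm (Submodule.Quotient.mk x) = z := by
    rw [hx, LinearEquiv.symm_apply_apply]
  exact ⟨⟨x, (quotTensorEquivQuotSMul_symm_mk_mem_ker_lTensor I d).mp (hz' ▸ hz)⟩, Subtype.ext hz'⟩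

lemma Ideal.comap_cycleToQuotTensor (d' : P₂ →ₗ[R] P₁) :
    ((LinearMap.range (d'.lTensor (R ⧸ I))).comap
        (LinearMap.ker (d.lTensor (R ⧸ I))).subtype).comap (I.cycleToQuotTensor d) =
      (LinearMap.range d' ⊔ I • ⊤).comap ((I • ⊤ : Submodule R P₀).comap d).subtype := by
  ext x
  rw [Submodule.mem_comap, Submodule.mem_comap, Submodule.mem_comap, sup_comm,
    ← Submodule.comap_map_mkQ,
    ← Submodule.range_mapQ _ _ _ (Submodule.smul_top_le_comap_smul_top I d'),
    Submodule.mem_comap, ← quotTensorEquivQuotSMul_symm_mem_range_lTensor]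
  rfl

end QuotTensor

noncomputable def Submodule.quotComapEquivOfSurjective {R M M' : Type*} [CommRing R]
    [AddCommGroup M] [Module R M] [AddCommGroup M'] [Module R M'] (f : M →ₗ[R] M')
    (hf : Function.Surjective f) (p : Submodule R M') : (M ⧸ p.comap f) ≃ₗ[R] M' ⧸ p :=
  (Submodule.quotEquivOfEq _ _ (by rw [LinearMap.ker_comp, Submodule.ker_mkQ])).trans
    ((p.mkQ ∘ₗ f).quotKerEquivOfSurjective ((Submodule.mkQ_surjective p).comp hf))

section Homology

variable {R : Type*} [CommRing R] (I : Ideal R)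
variable {M P₀ P₁ P₂ : Type*} [AddCommGroup M] [Module R M] [AddCommGroup P₀] [Module R P₀]
  [AddCommGroup P₁] [Module R P₁] [AddCommGroup P₂] [Module R P₂] [Module.Flat R P₀]
  {d₂ : P₂ →ₗ[R] P₁} {d₁ : P₁ →ₗ[R] P₀} {ε : P₀ →ₗ[R] M}

-- Instance search does not see through `TensorProduct.addCommGroup` on this submodule, which is
-- needed to form the quotient below.
instance (f : P₁ →ₗ[R] P₀) : AddCommGroup (LinearMap.ker (f.lTensor (R ⧸ I))) :=
  Submodule.addCommGroup _

noncomputable def Ideal.lTensorHomologyEquivKer (hε : Function.Surjective ε)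
    (h₁ : Function.Exact d₁ ε) (h₂ : Function.Exact d₂ d₁) :
    (LinearMap.ker (d₁.lTensor (R ⧸ I)) ⧸
        (LinearMap.range (d₂.lTensor (R ⧸ I))).comap (LinearMap.ker (d₁.lTensor (R ⧸ I))).subtype)
      ≃ₗ[R] LinearMap.ker (I.subtype.rTensor M) :=
  (Submodule.quotComapEquivOfSurjective _ (I.cycleToQuotTensor_surjective d₁) _).symm ≪≫ₗ
    Submodule.quotEquivOfEq _ _ (by
      rw [I.comap_cycleToQuotTensor, ← h₂.linearMap_ker_eq,
        I.ker_cycleToTensor hε h₁]) ≪≫ₗ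
    (I.cycleToTensor d₁ ε).quotKerEquivRange ≪≫ₗ
    LinearEquiv.ofEq _ _ (by rw [I.range_cycleToTensor hε h₁, I.ker_tensorSMul])

end Homology

section Tor

variable {R : Type u} [CommRing R]

lemma CategoryTheory.ProjectiveResolution.exact_hom_d_π {X : ModuleCat.{u} R}
    (P : ProjectiveResolution X) : Function.Exact (P.complex.d 1 0).hom (P.π.f 0).hom :=
  LinearMap.exact_iff.mpr P.exact₀.moduleCat_range_eq_ker.symm

lemma CategoryTheory.ProjectiveResolution.exact_hom_d_d {X : ModuleCat.{u} R}
    (P : ProjectiveResolution X) : Function.Exact (P.complex.d 2 1).hom (P.complex.d 1 0).hom :=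
  LinearMap.exact_iff.mpr <| ((HomologicalComplex.exactAt_iff' P.complex 2 1 0 (by simp)
    (by simp)).mp (P.complex_exactAt_succ 0)).moduleCat_range_eq_ker.symm

-- Mathlib's `Tor` derives in the second variable: it is the homology of `R ⧸ I ⊗ P` for a
-- projective resolution `P` of `M`.
noncomputable def Ideal.torOneEquivKerRTensor (I : Ideal R) (M : Type u) [AddCommGroup M]
    [Module R M] :
    ((Tor (ModuleCat.{u} R) 1).obj (ModuleCat.of R (R ⧸ I))).obj (ModuleCat.of R M) ≃ₗ[R]
      LinearMap.ker (I.subtype.rTensor M) :=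
  let P := ProjectiveResolution.of (ModuleCat.of R M)
  let C := (((MonoidalCategory.tensoringLeft _).obj (ModuleCat.of R (R ⧸ I))).mapHomologicalComplex
    _).obj P.complex
  (P.isoLeftDerivedObj _ 1 ≪≫ C.homologyIsoSc' 2 1 0 (by simp) (by simp) ≪≫
    (C.sc' 2 1 0).moduleCatHomologyIso).toLinearEquiv ≪≫ₗ
  Submodule.quotEquivOfEq _ _ (LinearMap.range_codRestrict _ _ _) ≪≫ₗ
  I.lTensorHomologyEquivKer ((ModuleCat.epi_iff_surjective _).mp inferInstance) P.exact_hom_d_π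
    P.exact_hom_d_d

end Tor

lemma exists_smul_eq_zero_of_rTensor_eq_zero {R : Type*} [CommRing R] (S : Submonoid R)
    (A : Type*) [CommRing A] [Algebra R A] [IsLocalization S A]
    {M N N' : Type*} [AddCommGroup M] [Module R M] [AddCommGroup N] [Module R N]
    [AddCommGroup N'] [Module R N'] [Module.Flat R (A ⊗[R] M)]
    {f : N →ₗ[R] N'} (hf : Function.Injective f) {x : N ⊗[R] M} (hx : f.rTensor M x = 0) :
    ∃ s : S, (s : R) • x = 0 := by
  have hcomm : (f.rTensor M).lTensor A =
      (TensorProduct.leftComm R N' A M).toLinearMap ∘ₗ f.rTensor (A ⊗[R] M) ∘ₗ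
        (TensorProduct.leftComm R N A M).symm.toLinearMap := by
    ext a n m
    simp
  have hinj : Function.Injective ((f.rTensor M).lTensor A) := by
    rw [hcomm]
    exact (TensorProduct.leftComm R N' A M).injective.comp
      ((Module.Flat.rTensor_preserves_injective_linearMap _ hf).comp
        (TensorProduct.leftComm R N A M).symm.injective)
  have h1 : (1 : A) ⊗ₜ[R] x = 0 := hinj (by simp [hx])
  have : IsLocalizedModule S (TensorProduct.mk R A (N ⊗[R] M) 1) :=
    (isLocalizedModule_iff_isBaseChange S A _).mpr (TensorProduct.isBaseChange R _ A)
  exact (IsLocalizedModule.eq_zero_iff S (TensorProduct.mk R A (N ⊗[R] M) 1)).mp h1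

theorem stmt_9 {R : Type u} [CommRing R] (M : Type u) [AddCommGroup M] [Module R M]
    (hQ : Module.Flat (FractionRing R) (FractionRing R ⊗[R] M))
    (hTor : ∀ I : Ideal R, I.FG →
      TorsionFree R (((Tor (ModuleCat.{u} R) 1).obj (ModuleCat.of R (R ⧸ I))).obj
        (ModuleCat.of R M))) :
    Module.Flat R M := by
  have : Module.Flat R (FractionRing R ⊗[R] M) := Module.Flat.trans R (FractionRing R) _
  refine Module.Flat.iff_rTensor_injective.mpr fun I hI ↦
    (injective_iff_map_eq_zero _).mpr fun x hx ↦ ?_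
  obtain ⟨s, hs⟩ := exists_smul_eq_zero_of_rTensor_eq_zero (nonZeroDivisors R) (FractionRing R)
    I.injective_subtype hx
  let e := I.torOneEquivKerRTensor M
  have hsx : (s : R) • (⟨x, hx⟩ : LinearMap.ker (I.subtype.rTensor M)) = 0 := Subtype.ext hs
  have h0 := hTor I hI s s.2 (e.symm ⟨x, hx⟩) (by rw [← map_smul, hsx, map_zero])
  exact congrArg Subtype.val (e.symm.map_eq_zero_iff.mp h0)
end

section
/- Let R be a commutative ring and M a flat R-module. Then sK_R(L ⊗_R M) ⊆ sK_R(L) for every R-module L. -/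
/-!
Write `I = (a₁, …, aₙ)`. The `I`-torsion of `L` is the kernel of `l ↦ (aᵢ • l)ᵢ : L → Lⁿ`, so by
flatness every `z ∈ L ⊗ M` killed by `I` is a finite sum `∑ lⱼ ⊗ mⱼ` with each `lⱼ` killed by `I`.
Then `⋂ⱼ Ann(lⱼ) ⊆ Ann(z) ⊆ p`, and primality of `p` gives some `j` with `Ann(lⱼ) ⊆ p`.
-/

open TensorProduct

open Submodule LinearMap

section

variable {R : Type*} [CommRing R] {L M : Type*} [AddCommGroup L] [Module R L]
  [AddCommGroup M] [Module R M]

theorem Module.Flat.mem_range_rTensor_torsionBySet [Module.Flat R M] {I : Ideal R} (hI : I.FG)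
    {z : L ⊗[R] M} (hz : I ≤ Ideal.torsionOf R (L ⊗[R] M) z) :
    z ∈ range ((torsionBySet R L I).subtype.rTensor M) := by
  classical
  obtain ⟨s, rfl⟩ := hI
  let f : L →ₗ[R] s → L := LinearMap.pi fun a ↦ (a : R) • LinearMap.id
  have hker : ker f = torsionBySet R L ↑(Ideal.span (s : Set R)) := by
    ext x
    simp [f, ← torsionBySet_eq_torsionBySet_span, funext_iff]
  have hf : TensorProduct.piLeft R M (fun _ : s ↦ L) ∘ₗ f.rTensor M =
      LinearMap.pi fun a : s ↦ (a : R) • LinearMap.id := by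
    ext x y
    simp [f, smul_tmul']
  have hfz : f.rTensor M z = 0 := by
    apply (TensorProduct.piLeft R M (fun _ : s ↦ L)).injective
    rw [← LinearEquiv.coe_toLinearMap, ← LinearMap.comp_apply, hf, map_zero]
    ext a
    exact hz (Ideal.subset_span a.2)
  rw [← hker]
  exact (Module.Flat.rTensor_exact M (exact_subtype_ker_map f) z).mp hfz

theorem Finset.inf_torsionOf_le_torsionOf_sum_tmul {ι : Type*} (s : Finset ι) (l : ι → L)
    (m : ι → M) :
    s.inf (fun i ↦ Ideal.torsionOf R L (l i)) ≤
      Ideal.torsionOf R (L ⊗[R] M) (∑ i ∈ s, l i ⊗ₜ m i) := by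
  intro r hr
  rw [Submodule.mem_finsetInf] at hr
  simp only [Ideal.mem_torsionOf_iff] at hr ⊢
  rw [Finset.smul_sum]
  exact Finset.sum_eq_zero fun i hi ↦ by rw [smul_tmul', hr i hi, zero_tmul]

end

theorem stmt_10 {R : Type*} [CommRing R] {M : Type*} [AddCommGroup M] [Module R M]
    [Module.Flat R M] (L : Type*) [AddCommGroup L] [Module R L] (p : Ideal R) :
    IsStrongKrullPrime R (L ⊗[R] M) p → IsStrongKrullPrime R L p := by
  rintro ⟨hp, h⟩
  refine ⟨hp, fun I hI hIp ↦ ?_⟩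
  obtain ⟨z, hIz, hzp⟩ := h I hI hIp
  obtain ⟨w, rfl⟩ := Module.Flat.mem_range_rTensor_torsionBySet hI hIz
  obtain ⟨S, rfl⟩ := TensorProduct.exists_finset w
  rw [map_sum] at hzp
  obtain ⟨x, -, hxp⟩ := hp.inf_le'.mp
    ((S.inf_torsionOf_le_torsionOf_sum_tmul (fun x ↦ (x.1 : L)) Prod.snd).trans hzp)
  exact ⟨x.1, fun a ha ↦ (mem_torsionBySet_iff _ _).mp x.1.2 ⟨a, ha⟩, hxp⟩
end

section
/- Let R be a commutative ring and M a faithfully flat R-module. Then sK_R(L ⊗_R M) = sK_R(L) for every R-module L. -/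
/-! Write `S = R \ p`. An element has annihilator inside `p` iff it is not `S`-torsion.
Annihilators `Ann z` appear as `Ideal.torsionOf R L z`, which is by definition the kernel
`ker (toSpanSingleton z)` used in `IsStrongKrullPrime`.

If `p ∈ sK(L ⊗ M)` and `I ⊆ p` is finitely generated, then, `M` being flat, the `I`-torsion
of `L ⊗ M` is the image of `(I`-torsion of `L) ⊗ M`. Were all of the `I`-torsion of `L` also
`S`-torsion, so would be that image, contradicting the witness in `L ⊗ M`.

Conversely, let `z ∈ L` have `J = Ann z ⊆ p`. Flatness embeds `R/J ⊗ M` in `L ⊗ M` via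
`1 ⊗ m ↦ z ⊗ m`, so `Ann (z ⊗ m) = Ann (1 ⊗ m)`. Faithful flatness makes `R_p/J R_p ⊗ M`
nonzero, so some `1 ⊗ m` is nonzero there; as `S` acts invertibly on it, no `s ∈ S` kills the
corresponding `1 ⊗ m` in `R/J ⊗ M`. -/

open TensorProduct

open Submodule

section

variable {R : Type*} [CommRing R] {M L N : Type*} [AddCommGroup M] [Module R M]
  [AddCommGroup L] [Module R L] [AddCommGroup N] [Module R N]

theorem Ideal.torsionOf_le_iff_notMem_torsion' {p : Ideal R} [p.IsPrime] {z : L} :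
    Ideal.torsionOf R L z ≤ p ↔ z ∉ torsion' R L p.primeCompl :=
  ⟨fun h ⟨⟨_, hs⟩, hsz⟩ => hs (h hsz),
    fun h s hsz => not_not.1 fun hs => h ⟨⟨s, hs⟩, hsz⟩⟩

theorem Ideal.torsionOf_le_torsionOf_map (f : L →ₗ[R] N) (z : L) :
    Ideal.torsionOf R L z ≤ Ideal.torsionOf R N (f z) := fun a ha => by
  rw [Ideal.mem_torsionOf_iff] at ha ⊢
  rw [← map_smul, ha, map_zero]

theorem Ideal.torsionOf_map_of_injective {f : L →ₗ[R] N} (hf : Function.Injective f) (z : L) :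
    Ideal.torsionOf R N (f z) = Ideal.torsionOf R L z := by
  ext a
  simp only [Ideal.mem_torsionOf_iff, ← map_smul, map_eq_zero_iff f hf]

theorem LinearMap.range_rTensor_le_torsion' (S : Submonoid R) {f : N →ₗ[R] L}
    (hf : LinearMap.range f ≤ torsion' R L S) :
    LinearMap.range (f.rTensor M) ≤ torsion' R (L ⊗[R] M) S := by
  rintro _ ⟨t, rfl⟩
  induction t using TensorProduct.induction_on with
  | zero => simp
  | tmul n m =>
    obtain ⟨a, ha⟩ := hf ⟨n, rfl⟩
    refine ⟨a, ?_⟩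
    rw [rTensor_tmul, Submonoid.smul_def, smul_tmul', ← Submonoid.smul_def, ha, zero_tmul]
  | add x y hx hy => rw [map_add]; exact add_mem hx hy

theorem Submodule.torsionBySet_rTensor_le_range [Module.Flat R M] {I : Ideal R} (hI : I.FG) :
    torsionBySet R (L ⊗[R] M) I ≤ LinearMap.range ((torsionBySet R L I).subtype.rTensor M) := by
  classical
  obtain ⟨S, rfl⟩ := hI
  let f : L →ₗ[R] S → L := LinearMap.pi fun a => (a : R) • LinearMap.id
  have hexact : Function.Exact (torsionBySet R L (Ideal.span (S : Set R))).subtype f := by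
    rw [LinearMap.exact_iff, range_subtype, ← torsionBySet_eq_torsionBySet_span]
    ext x
    simp [f, mem_torsionBySet_iff, funext_iff]
  intro t ht
  refine ((Module.Flat.rTensor_exact M hexact) t).1 ?_
  apply (TensorProduct.piLeft R M fun _ : S => L).injective
  have hpi : ∀ (a : S) (x : L ⊗[R] M),
      TensorProduct.piLeft R M (fun _ : S => L) (f.rTensor M x) a = (a : R) • x := by
    intro a x
    induction x using TensorProduct.induction_on with
    | zero => simp
    | tmul l m => simp [f, smul_tmul']
    | add x y hx hy => simp_all
  ext a
  rw [hpi, map_zero]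
  exact (mem_torsionBySet_iff _ _).1 ht ⟨a, Ideal.subset_span a.2⟩

theorem TensorProduct.exists_one_tmul_ne_zero (A : Type*) [Semiring A] [Algebra R A]
    [Nontrivial (A ⊗[R] M)] :
    ∃ m : M, (1 : A) ⊗ₜ[R] m ≠ 0 := by
  by_contra! h
  have : Subsingleton (A ⊗[R] M) := subsingleton_of_forall_eq 0 fun x => by
    induction x using TensorProduct.induction_on with
    | zero => rfl
    | tmul a m => rw [← mul_one a, ← smul_eq_mul, ← smul_tmul', h, smul_zero]
    | add x y hx hy => rw [hx, hy, add_zero]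
  exact not_subsingleton _ this

theorem Ideal.map_algebraMap_atPrime_ne_top {p J : Ideal R} [p.IsPrime] (hJ : J ≤ p) :
    J.map (algebraMap R (Localization.AtPrime p)) ≠ ⊤ :=
  ne_top_of_le_ne_top (Ideal.IsMaximal.ne_top inferInstance) (Ideal.map_mono hJ)

theorem Module.FaithfullyFlat.exists_torsionOf_one_tmul_le [Module.FaithfullyFlat R M]
    {p J : Ideal R} [p.IsPrime] (hJ : J ≤ p) :
    ∃ m : M, Ideal.torsionOf R ((R ⧸ J) ⊗[R] M) (1 ⊗ₜ m) ≤ p := by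
  let Rₚ := Localization.AtPrime p
  let N := Rₚ ⧸ J.map (algebraMap R Rₚ)
  have : Nontrivial N := Ideal.Quotient.nontrivial_iff.2 (Ideal.map_algebraMap_atPrime_ne_top hJ)
  have : Nontrivial (N ⊗[R] M) :=
    (Module.FaithfullyFlat.nontrivial_tensorProduct_iff_left R N).2 inferInstance
  obtain ⟨m, hm⟩ := TensorProduct.exists_one_tmul_ne_zero (R := R) (M := M) N
  refine ⟨m, fun s hs => not_not.1 fun hsp => hm ?_⟩
  let ψ : (R ⧸ J) →ₐ[R] N := Ideal.quotientMapₐ _ (Algebra.ofId R Rₚ) Ideal.le_comap_map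
  have hs' : s • ((1 : N) ⊗ₜ[R] m) = 0 := by
    simpa using congrArg (ψ.toLinearMap.rTensor M) ((Ideal.mem_torsionOf_iff _ _).1 hs)
  have hu : IsUnit (algebraMap R N s) :=
    (IsLocalization.map_units Rₚ (⟨s, hsp⟩ : p.primeCompl)).map (Ideal.Quotient.mk _)
  rwa [← algebraMap_smul N, hu.smul_eq_zero] at hs'

theorem Ideal.torsionOf_tmul [Module.Flat R M] (z : L) (m : M) :
    Ideal.torsionOf R (L ⊗[R] M) (z ⊗ₜ m) =
      Ideal.torsionOf R ((R ⧸ Ideal.torsionOf R L z) ⊗[R] M) (1 ⊗ₜ m) := by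
  let φ := (Ideal.torsionOf R L z).liftQ (LinearMap.toSpanSingleton R L z) le_rfl
  have hφ : Function.Injective φ :=
    LinearMap.ker_eq_bot.1 (Submodule.ker_liftQ_eq_bot _ _ _ le_rfl)
  have hφ1 : φ 1 = z := one_smul R z
  have hφM : Function.Injective (φ.rTensor M) :=
    Module.Flat.rTensor_preserves_injective_linearMap φ hφ
  rw [← Ideal.torsionOf_map_of_injective hφM, LinearMap.rTensor_tmul, hφ1]

theorem IsStrongKrullPrime.of_tensorProduct [Module.Flat R M] {p : Ideal R}
    (h : IsStrongKrullPrime R (L ⊗[R] M) p) : IsStrongKrullPrime R L p := by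
  obtain ⟨hp, h⟩ := h
  refine ⟨hp, fun I hI hIp => ?_⟩
  obtain ⟨t, hIt, htp⟩ := h I hI hIp
  have ht : t ∈ torsionBySet R (L ⊗[R] M) I := (mem_torsionBySet_iff _ _).2 fun a => hIt a.2
  have hnot : ¬torsionBySet R L I ≤ torsion' R L p.primeCompl := fun hle =>
    Ideal.torsionOf_le_iff_notMem_torsion'.1 htp <|
      LinearMap.range_rTensor_le_torsion' _ (by rwa [range_subtype])
        (torsionBySet_rTensor_le_range hI ht)
  obtain ⟨k, hkI, hk⟩ := SetLike.not_le_iff_exists.1 hnot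
  exact ⟨k, fun a ha => (mem_torsionBySet_iff _ _).1 hkI ⟨a, ha⟩,
    Ideal.torsionOf_le_iff_notMem_torsion'.2 hk⟩

theorem IsStrongKrullPrime.tensorProduct [Module.FaithfullyFlat R M] {p : Ideal R}
    (h : IsStrongKrullPrime R L p) : IsStrongKrullPrime R (L ⊗[R] M) p := by
  obtain ⟨hp, h⟩ := h
  refine ⟨hp, fun I hI hIp => ?_⟩
  obtain ⟨z, hIz, hzp⟩ := h I hI hIp
  obtain ⟨m, hm⟩ := Module.FaithfullyFlat.exists_torsionOf_one_tmul_le (M := M) hzp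
  refine ⟨z ⊗ₜ m, hIz.trans ?_, (Ideal.torsionOf_tmul z m).trans_le hm⟩
  exact Ideal.torsionOf_le_torsionOf_map ((TensorProduct.mk R L M).flip m) z

end

theorem stmt_11 {R : Type*} [CommRing R] {M : Type*} [AddCommGroup M] [Module R M]
    [Module.FaithfullyFlat R M] (L : Type*) [AddCommGroup L] [Module R L] (p : Ideal R) :
    IsStrongKrullPrime R (L ⊗[R] M) p ↔ IsStrongKrullPrime R L p :=
  ⟨IsStrongKrullPrime.of_tensorProduct, IsStrongKrullPrime.tensorProduct⟩
end

section
/- Let φ: R → S be a ring homomorphism, L an R-module, and M an S-module that is flat as an R-module. Then for every p ∈ sK_R(L) and every Q ∈ sK_S(M/pM), one has Q ∈ sK_S(L ⊗_R M). -/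
open TensorProduct

/-!
Given a finitely generated `J ≤ Q`, pick `z ∈ M` whose class in `M/pM` has annihilator between
`J` and `Q`. Then `J z ⊆ pM` is a finitely generated `R`-submodule, hence lies in `IM` for some
finitely generated `I ≤ p`; choose `y ∈ L` with `I ≤ Ann y ≤ p`. The element `z ⊗ y` works:
`J` kills it because `I` kills `y`, and if `s (z ⊗ y) = 0` then flatness of `M` gives
`s z ∈ (Ann y) M ⊆ pM`, so `s ∈ Q`.
-/

section

variable {R : Type*} [CommRing R] {M : Type*} [AddCommGroup M] [Module R M]

theorem mem_map_algebraMap_smul_top_iff {S : Type*} [CommRing S] [Algebra R S] [Module S M]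
    [IsScalarTower R S M] (I : Ideal R) (m : M) :
    m ∈ I.map (algebraMap R S) • (⊤ : Submodule S M) ↔ m ∈ I • (⊤ : Submodule R M) := by
  rw [← Submodule.restrictScalars_mem R, Ideal.smul_restrictScalars,
    Submodule.restrictScalars_top]

theorem exists_fg_le_of_mem_smul_top {p : Ideal R} {m : M} (h : m ∈ p • (⊤ : Submodule R M)) :
    ∃ I : Ideal R, I.FG ∧ I ≤ p ∧ m ∈ I • (⊤ : Submodule R M) := by
  refine Submodule.smul_induction_on h (fun r hr n _ => ?_) fun m₁ m₂ h₁ h₂ => ?_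
  · exact ⟨Ideal.span {r}, Submodule.fg_span_singleton r,
      (Ideal.span_singleton_le_iff_mem p).2 hr,
      Submodule.smul_mem_smul (Ideal.mem_span_singleton_self r) trivial⟩
  · obtain ⟨I₁, hI₁, hI₁p, hm₁⟩ := h₁
    obtain ⟨I₂, hI₂, hI₂p, hm₂⟩ := h₂
    exact ⟨I₁ ⊔ I₂, Submodule.FG.sup hI₁ hI₂, sup_le hI₁p hI₂p,
      add_mem (Submodule.smul_mono_left le_sup_left hm₁)
        (Submodule.smul_mono_left le_sup_right hm₂)⟩

theorem exists_fg_le_of_fg_le_smul_top {p : Ideal R} {N : Submodule R M} (hN : N.FG)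
    (h : N ≤ p • ⊤) : ∃ I : Ideal R, I.FG ∧ I ≤ p ∧ N ≤ I • ⊤ := by
  induction N, hN using Submodule.fg_induction with
  | singleton x =>
    obtain ⟨I, hI, hIp, hx⟩ :=
      exists_fg_le_of_mem_smul_top (h (Submodule.mem_span_singleton_self x))
    exact ⟨I, hI, hIp, (Submodule.span_singleton_le_iff_mem x _).2 hx⟩
  | sup N₁ N₂ _ _ ih₁ ih₂ =>
    obtain ⟨I₁, hI₁, hI₁p, hN₁⟩ := ih₁ (le_sup_left.trans h)
    obtain ⟨I₂, hI₂, hI₂p, hN₂⟩ := ih₂ (le_sup_right.trans h)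
    exact ⟨I₁ ⊔ I₂, Submodule.FG.sup hI₁ hI₂, sup_le hI₁p hI₂p,
      sup_le (hN₁.trans (Submodule.smul_mono_left le_sup_left))
        (hN₂.trans (Submodule.smul_mono_left le_sup_right))⟩

theorem tmul_eq_zero_iff_mem_smul_top [Module.Flat R M] {L : Type*} [AddCommGroup L]
    [Module R L] (m : M) (y : L) :
    m ⊗ₜ[R] y = 0 ↔
      m ∈ LinearMap.ker (LinearMap.toSpanSingleton R L y) • (⊤ : Submodule R M) := by
  set a := LinearMap.ker (LinearMap.toSpanSingleton R L y)
  -- `R ⧸ Ann y ≅ R y ⊆ L`, and flatness keeps `M ⊗ (R ⧸ Ann y) ≅ M ⧸ (Ann y) M` inside `M ⊗ L`.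
  let ι : (R ⧸ a) →ₗ[R] L := a.liftQ (LinearMap.toSpanSingleton R L y) le_rfl
  have hinj : Function.Injective (ι.lTensor M) :=
    Module.Flat.lTensor_preserves_injective_linearMap ι <| LinearMap.ker_eq_bot.1 <|
      Submodule.ker_liftQ_eq_bot _ _ _ le_rfl
  have hι : ι.lTensor M (m ⊗ₜ Ideal.Quotient.mk a 1) = m ⊗ₜ y :=
    congrArg (m ⊗ₜ[R] ·) (one_smul R y)
  rw [← hι, map_eq_zero_iff _ hinj, ← (tensorQuotEquivQuotSMul M a).map_eq_zero_iff,
    tensorQuotEquivQuotSMul_tmul_mk, one_smul, Submodule.Quotient.mk_eq_zero]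

end

theorem stmt_12 {R S : Type*} [CommRing R] [CommRing S] [Algebra R S]
    (L : Type*) [AddCommGroup L] [Module R L]
    (M : Type*) [AddCommGroup M] [Module S M] [Module R M] [IsScalarTower R S M]
    [Module.Flat R M]
    (p : Ideal R) (hp : IsStrongKrullPrime R L p) (Q : Ideal S)
    (hQ : IsStrongKrullPrime S (M ⧸ (p.map (algebraMap R S) • (⊤ : Submodule S M))) Q) :
    IsStrongKrullPrime S (M ⊗[R] L) Q := by
  refine ⟨hQ.1, fun J hJ hJQ => ?_⟩
  obtain ⟨z', hJz, hzQ⟩ := hQ.2 J hJ hJQ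
  obtain ⟨z, rfl⟩ := Submodule.Quotient.mk_surjective _ z'
  have mem_ann_iff (s : S) : s ∈ LinearMap.ker (LinearMap.toSpanSingleton S
      (M ⧸ p.map (algebraMap R S) • (⊤ : Submodule S M)) (Submodule.Quotient.mk z)) ↔
        s • z ∈ p • (⊤ : Submodule R M) := by
    rw [LinearMap.mem_ker, LinearMap.toSpanSingleton_apply, ← Submodule.Quotient.mk_smul,
      Submodule.Quotient.mk_eq_zero, mem_map_algebraMap_smul_top_iff]
  obtain ⟨T, rfl⟩ := hJ
  obtain ⟨I, hI, hIp, hTz⟩ := exists_fg_le_of_fg_le_smul_top (p := p)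
    (Submodule.fg_span (T.finite_toSet.image fun s : S => s • z))
    (Submodule.span_le.2 <| Set.image_subset_iff.2 fun s hs =>
      (mem_ann_iff s).1 (hJz (Submodule.subset_span hs)))
  obtain ⟨y, hIy, hyp⟩ := hp.2 I hI hIp
  refine ⟨z ⊗ₜ[R] y, Ideal.span_le.2 fun s hs => ?_, fun s hs => ?_⟩
  · rw [SetLike.mem_coe, LinearMap.mem_ker, LinearMap.toSpanSingleton_apply, smul_tmul',
      tmul_eq_zero_iff_mem_smul_top]
    exact Submodule.smul_mono_left hIy (hTz (Submodule.subset_span ⟨s, hs, rfl⟩))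
  · rw [LinearMap.mem_ker, LinearMap.toSpanSingleton_apply, smul_tmul',
      tmul_eq_zero_iff_mem_smul_top] at hs
    exact hzQ ((mem_ann_iff s).2 (Submodule.smul_mono_left hyp hs))
end

section
/- Let φ: R → S be a ring homomorphism, M an R-flat S-module, u ∈ L an element of an R-module L, and t ∈ M. Then the S-ideal ((Ann_R(u)·M) :_S t) equals the annihilator Ann_S(u ⊗ t) of the element u ⊗ t of the S-module L ⊗_R M. -/
open TensorProduct

/-!
Since `R ⧸ Ann_R(u) ≅ R ∙ u ⊆ L` and `M` is flat, `m ⊗ u` vanishes in `M ⊗ L` iff `m ⊗ 1` vanishes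
in `M ⊗ (R ⧸ Ann_R(u)) ≅ M ⧸ Ann_R(u) • M`, i.e. iff `m ∈ Ann_R(u) • M`. Applied to `m = s • t`,
this is the claim, because `Ann_R(u) S • M` and `Ann_R(u) • M` have the same elements.
-/

namespace TensorProduct

variable {R : Type*} [CommRing R] {M L : Type*} [AddCommGroup M] [Module R M]
  [AddCommGroup L] [Module R L]

theorem tmul_one_eq_zero_iff_mem_smul_top (I : Ideal R) (m : M) :
    m ⊗ₜ[R] (1 : R ⧸ I) = 0 ↔ m ∈ I • (⊤ : Submodule R M) := by
  rw [← tensorQuotEquivQuotSMul_symm_mk, LinearEquiv.map_eq_zero_iff,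
    Submodule.Quotient.mk_eq_zero]

theorem tmul_eq_zero_iff_mem_ker_toSpanSingleton_smul_top [Module.Flat R M] (u : L) (m : M) :
    m ⊗ₜ[R] u = 0 ↔
      m ∈ LinearMap.ker (LinearMap.toSpanSingleton R L u) • (⊤ : Submodule R M) := by
  set I := LinearMap.ker (LinearMap.toSpanSingleton R L u)
  let g : (R ⧸ I) →ₗ[R] L := I.liftQ (LinearMap.toSpanSingleton R L u) le_rfl
  have hg : Function.Injective g := by
    rw [← LinearMap.ker_eq_bot, Submodule.ker_liftQ_eq_bot _ _ _ le_rfl]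
  have hmu : g.lTensor M (m ⊗ₜ 1) = m ⊗ₜ u := by
    simp [g, ← Ideal.Quotient.mk_eq_mk, ← map_one (Ideal.Quotient.mk I)]
  rw [← tmul_one_eq_zero_iff_mem_smul_top, ← hmu,
    map_eq_zero_iff _ (Module.Flat.lTensor_preserves_injective_linearMap g hg)]

end TensorProduct

theorem stmt_13 {R S : Type*} [CommRing R] [CommRing S] [Algebra R S]
    (L : Type*) [AddCommGroup L] [Module R L]
    (M : Type*) [AddCommGroup M] [Module S M] [Module R M] [IsScalarTower R S M]
    [Module.Flat R M] (u : L) (t : M) :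
    ((Ideal.map (algebraMap R S) (LinearMap.ker (LinearMap.toSpanSingleton R L u)) •
        (⊤ : Submodule S M)).colon (Submodule.span S {t})) =
      LinearMap.ker (LinearMap.toSpanSingleton S (M ⊗[R] L) (t ⊗ₜ u)) := by
  ext s
  rw [Submodule.mem_colon_span_singleton, LinearMap.mem_ker, LinearMap.toSpanSingleton_apply,
    smul_tmul', tmul_eq_zero_iff_mem_ker_toSpanSingleton_smul_top,
    ← Submodule.restrictScalars_mem R, Ideal.smul_restrictScalars, Submodule.restrictScalars_top]
end

section
/- Let φ: R → S be a homomorphism of commutative rings where R is Noetherian, L a finitely generated R-module, and M an S-module that is flat as an R-module. Then sK_S(L ⊗_R M) = ⋃_{p ∈ Ass_R(L)} sK_S(M/pM). -/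
/-!
Strong Krull primes pass to larger modules along injective maps, and a strong Krull prime of a
submodule of a finite product is one of some factor: add up the finitely many ideals witnessing
the failure at each factor, and use that `Q` is prime.

If `p ∈ Ass L`, then `R/p ↪ L`, so by flatness `M/pM ≅ M ⊗ R/p ↪ M ⊗ L`. Conversely, a minimal
primary decomposition `0 = ⋂ qᵢ` of `L` embeds `M ⊗ L` into `∏ M ⊗ L/qᵢ`, so `Q` is a strong Krull
prime of some `M ⊗ L/q` with `q` primary and `p = √(q : L) ∈ Ass L`. Some power of each element of
`p` kills `L/q`, so `pS ⊆ Q`; hence witnesses may be chosen killed by `p`, which by flatness means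
lying in `M ⊗ (0 :_{L/q} p)`. That module over the domain `R/p` is finite and torsion-free, so it
embeds into `(R/p)ⁿ`, and the product step once more lands in `M ⊗ R/p ≅ M/pM`.
-/

open TensorProduct

lemma LinearMap.ker_toSpanSingleton_apply_of_injective {S N N' : Type*} [Semiring S]
    [AddCommMonoid N] [Module S N] [AddCommMonoid N'] [Module S N'] {f : N →ₗ[S] N'}
    (hf : Function.Injective f) (z : N) :
    ker (toSpanSingleton S N' (f z)) = ker (toSpanSingleton S N z) := by
  rw [← comp_toSpanSingleton, ker_comp_of_ker_eq_bot _ (ker_eq_bot_of_injective hf)]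

namespace IsStrongKrullPrime

variable {S N N' : Type*} [CommRing S] [AddCommGroup N] [Module S N] [AddCommGroup N']
  [Module S N'] {Q : Ideal S}

open LinearMap

lemma of_injective (h : IsStrongKrullPrime S N Q) {f : N →ₗ[S] N'}
    (hf : Function.Injective f) : IsStrongKrullPrime S N' Q := by
  refine ⟨h.1, fun I hI hIQ => ?_⟩
  obtain ⟨z, hz⟩ := h.2 I hI hIQ
  exact ⟨f z, by rwa [ker_toSpanSingleton_apply_of_injective hf]⟩

lemma annihilator_le (h : IsStrongKrullPrime S N Q) : Module.annihilator S N ≤ Q := by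
  obtain ⟨z, -, hzQ⟩ := h.2 ⊥ Submodule.fg_bot bot_le
  exact le_trans (fun s hs => by simp [Module.mem_annihilator.1 hs z]) hzQ

lemma of_torsionBySet_le_range (h : IsStrongKrullPrime S N Q) {f : N' →ₗ[S] N}
    (hf : Function.Injective f) {I : Ideal S} (hI : I.FG) (hIQ : I ≤ Q)
    (hrange : Submodule.torsionBySet S N I ≤ range f) : IsStrongKrullPrime S N' Q := by
  refine ⟨h.1, fun J hJ hJQ => ?_⟩
  obtain ⟨z, hz, hzQ⟩ := h.2 (J ⊔ I) (Submodule.FG.sup hJ hI) (sup_le hJQ hIQ)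
  obtain ⟨y, rfl⟩ := hrange <| (Submodule.mem_torsionBySet_iff _ _).2 fun a => by
    simpa using hz (Submodule.mem_sup_right a.2)
  rw [ker_toSpanSingleton_apply_of_injective hf] at hz hzQ
  exact ⟨y, le_sup_left.trans hz, hzQ⟩

lemma exists_of_injective_pi {ι : Type*} [Finite ι] {N : ι → Type*} [∀ i, AddCommGroup (N i)]
    [∀ i, Module S (N i)] (h : IsStrongKrullPrime S N' Q) {f : N' →ₗ[S] ∀ i, N i}
    (hf : Function.Injective f) : ∃ i, IsStrongKrullPrime S (N i) Q := by
  cases nonempty_fintype ι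
  by_contra! hfail
  have hwitness : ∀ i, ∃ J : Ideal S, J.FG ∧ J ≤ Q ∧ ∀ z : N i,
      J ≤ ker (toSpanSingleton S (N i) z) → ¬ ker (toSpanSingleton S (N i) z) ≤ Q := by
    intro i
    simpa [IsStrongKrullPrime, h.1] using hfail i
  choose J hJ hJQ hJz using hwitness
  obtain ⟨z, hz, hzQ⟩ := h.2 (⨆ i, J i) (Submodule.fg_iSup _ hJ) (iSup_le hJQ)
  have hcomp : ∀ i, ker (toSpanSingleton S N' z) ≤ ker (toSpanSingleton S (N i) (f z i)) :=
    fun i s hs => by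
      rw [mem_ker, toSpanSingleton_apply] at hs ⊢
      rw [← Pi.smul_apply, ← map_smul, hs, map_zero, Pi.zero_apply]
  have hinf : Finset.univ.inf (fun i => ker (toSpanSingleton S (N i) (f z i))) ≤ Q := by
    refine le_trans (fun s hs => ?_) hzQ
    simp only [Submodule.mem_finsetInf, Finset.mem_univ, true_implies, mem_ker,
      toSpanSingleton_apply] at hs ⊢
    exact hf (by ext i; simp [hs i])
  obtain ⟨i, -, hi⟩ := h.1.inf_le'.1 hinf
  exact hJz i (f z i) ((le_iSup J i).trans (hz.trans (hcomp i))) hi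

end IsStrongKrullPrime

open Submodule in
lemma Module.exists_injective_pi_of_isTorsionFree {D V : Type*} [CommRing D] [IsDomain D]
    [AddCommGroup V] [Module D V] [Module.Finite D V] [Module.IsTorsionFree D V] :
    ∃ (n : ℕ) (θ : V →ₗ[D] Fin n → D), Function.Injective θ := by
  classical
  obtain ⟨m, v, hv⟩ := Module.Finite.exists_fin (R := D) (M := V)
  obtain ⟨I, hI, hImax⟩ := exists_maximal_linearIndepOn D v
  have hmul : ∀ i, ∃ a : D, a ≠ 0 ∧ a • v i ∈ span D (v '' I) := by
    intro i
    by_cases hi : i ∈ I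
    · exact ⟨1, one_ne_zero, by simpa using subset_span (Set.mem_image_of_mem v hi)⟩
    · exact hImax i hi
  choose a ha hav using hmul
  -- multiplication by `∏ i, a i` is injective and maps `V` into the free module on `v '' I`
  have hA : ∏ i, a i ≠ 0 := Finset.prod_ne_zero_iff.2 fun i _ => ha i
  have hrange : ∀ x, (∏ i, a i) • x ∈ span D (v '' I) := by
    suffices LinearMap.range (LinearMap.lsmul D V (∏ i, a i)) ≤ span D (v '' I) from
      fun x => this ⟨x, rfl⟩
    rw [LinearMap.range_eq_map, ← hv, map_span_le]
    rintro _ ⟨i, rfl⟩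
    rw [LinearMap.lsmul_apply, ← Finset.prod_erase_mul _ _ (Finset.mem_univ i), mul_smul]
    exact smul_mem _ _ (hav i)
  let b := (Module.Basis.span hI.linearIndependent).reindex (Fintype.equivFin I)
  have hspan : span D (Set.range fun i : I => v i) = span D (v '' I) := by
    rw [Set.image_eq_range]
  let ℓ : V →ₗ[D] span D (Set.range fun i : I => v i) :=
    (LinearMap.lsmul D V (∏ i, a i)).codRestrict _ (hspan ▸ hrange)
  refine ⟨_, b.equivFun.toLinearMap ∘ₗ ℓ, b.equivFun.injective.comp fun x y hxy => ?_⟩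
  exact smul_right_injective V hA (congrArg Subtype.val hxy)

namespace Submodule.IsPrimary

variable {R L : Type*} [CommRing R] [AddCommGroup L] [Module R L] {q : Submodule R L}

lemma isTorsionFree_torsionBySet_quotient (hq : q.IsPrimary) :
    Module.IsTorsionFree (R ⧸ (q.colon Set.univ).radical)
      (torsionBySet R (L ⧸ q) ((q.colon Set.univ).radical : Set R)) := by
  have := hq.isPrime_radical_colon
  refine .of_smul_eq_zero fun c y hcy => ?_
  obtain ⟨a, rfl⟩ := Ideal.Quotient.mk_surjective c
  obtain ⟨⟨x⟩, hx⟩ := y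
  rw [torsionBySet.mk_smul] at hcy
  have hax : a • x ∈ q := (Submodule.Quotient.mk_eq_zero q).1 (congrArg Subtype.val hcy)
  rcases hq.mem_or_mem hax with hx | ⟨n, hn⟩
  · exact Or.inr (Subtype.ext ((Submodule.Quotient.mk_eq_zero q).2 hx))
  · refine Or.inl (Ideal.Quotient.eq_zero_iff_mem.2 ⟨n, ?_⟩)
    exact mem_colon.2 fun x _ =>
      hn (smul_mem_pointwise_smul x (a ^ n) (⊤ : Submodule R L) trivial)

end Submodule.IsPrimary

section

variable {R : Type*} [CommRing R]

noncomputable def TensorProduct.tensorQuotEquivQuotMapSMul {S : Type*} [CommRing S] [Algebra R S]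
    (M : Type*) [AddCommGroup M] [Module S M] [Module R M] [IsScalarTower R S M] (p : Ideal R) :
    M ⊗[R] (R ⧸ p) ≃ₗ[S] M ⧸ (p.map (algebraMap R S) • (⊤ : Submodule S M)) where
  __ := tensorQuotEquivQuotSMul M p ≪≫ₗ Submodule.quotEquivOfEq _ _
    (by rw [Ideal.smul_restrictScalars, Submodule.restrictScalars_top]) ≪≫ₗ
    Submodule.Quotient.restrictScalarsEquiv R _
  map_smul' s x := by
    induction x using TensorProduct.induction_on with
    | zero => simp
    | add x y hx hy => simp_all
    | tmul m r =>
      obtain ⟨r, rfl⟩ := Ideal.Quotient.mk_surjective r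
      simpa [smul_tmul'] using smul_comm r s _

lemma TensorProduct.piRight_lTensor_pi (M : Type*) [AddCommGroup M] [Module R M]
    {X : Type*} [AddCommGroup X] [Module R X] {ι : Type*} [Fintype ι] [DecidableEq ι]
    {Y : ι → Type*} [∀ i, AddCommGroup (Y i)] [∀ i, Module R (Y i)] (g : ∀ i, X →ₗ[R] Y i)
    (z : M ⊗[R] X) (i : ι) :
    piRight R R M Y ((LinearMap.pi g).lTensor M z) i = (g i).lTensor M z := by
  induction z using TensorProduct.induction_on with
  | zero => simp
  | add x y hx hy => simp_all
  | tmul m x => simp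

lemma Module.annihilator_le_annihilator_tensorProduct (M : Type*) [AddCommGroup M] [Module R M]
    (X : Type*) [AddCommGroup X] [Module R X] :
    Module.annihilator R X ≤ Module.annihilator R (M ⊗[R] X) := fun r hr =>
  Module.mem_annihilator.2 fun z => by
    induction z using TensorProduct.induction_on with
    | zero => exact smul_zero r
    | tmul m x => rw [← tmul_smul, Module.mem_annihilator.1 hr x, tmul_zero]
    | add u w hu hw => rw [smul_add, hu, hw, add_zero]

lemma Module.Flat.torsionBySet_le_range_lTensor (M : Type*) [AddCommGroup M] [Module R M]
    [Module.Flat R M] (X : Type*) [AddCommGroup X] [Module R X] {p : Ideal R} (hp : p.FG) :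
    Submodule.torsionBySet R (M ⊗[R] X) p ≤
      LinearMap.range ((Submodule.torsionBySet R X p).subtype.lTensor M) := by
  classical
  obtain ⟨G, rfl⟩ := hp
  let f : X →ₗ[R] G → X := LinearMap.pi fun a => (a : R) • LinearMap.id
  have hker : LinearMap.ker f = Submodule.torsionBySet R X (Ideal.span (G : Set R) : Set R) := by
    ext x
    rw [← Submodule.torsionBySet_eq_torsionBySet_span, Submodule.mem_torsionBySet_iff]
    simp [f, funext_iff]
  have hexact : Function.Exact
      ((Submodule.torsionBySet R X (Ideal.span (G : Set R) : Set R)).subtype.lTensor M)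
      (f.lTensor M) :=
    Module.Flat.lTensor_exact M (LinearMap.exact_iff.2 (by rw [Submodule.range_subtype, hker]))
  intro z hz
  refine (hexact z).1 ((piRight R R M _).injective ?_)
  ext a
  rw [piRight_lTensor_pi, map_zero, Pi.zero_apply, LinearMap.lTensor_smul, LinearMap.lTensor_id]
  exact (Submodule.mem_torsionBySet_iff _ _).1 hz ⟨a, Ideal.subset_span a.2⟩

end

section

variable {R S : Type*} [CommRing R] [CommRing S] [Algebra R S] {L : Type*} [AddCommGroup L]
  [Module R L] (M : Type*) [AddCommGroup M] [Module S M] [Module R M] [IsScalarTower R S M]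
  [Module.Flat R M] {Q : Ideal S}

open AlgebraTensorModule in
lemma IsStrongKrullPrime.exists_tensor_of_injective_pi {ι : Type*} [Fintype ι] [DecidableEq ι]
    {X : ι → Type*} [∀ i, AddCommGroup (X i)] [∀ i, Module R (X i)]
    (h : IsStrongKrullPrime S (M ⊗[R] L) Q) {g : L →ₗ[R] ∀ i, X i} (hg : Function.Injective g) :
    ∃ i, IsStrongKrullPrime S (M ⊗[R] X i) Q :=
  h.exists_of_injective_pi (f := (TensorProduct.piRight R S M X).toLinearMap ∘ₗ lTensor S M g)
    ((TensorProduct.piRight R S M X).injective.comp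
      (Module.Flat.lTensor_preserves_injective_linearMap g hg))

open Submodule AlgebraTensorModule in
lemma IsStrongKrullPrime.tensor_quotient_radical_colon [IsNoetherianRing R] [Module.Finite R L]
    {q : Submodule R L} (hq : q.IsPrimary) (h : IsStrongKrullPrime S (M ⊗[R] (L ⧸ q)) Q) :
    IsStrongKrullPrime S (M ⊗[R] (R ⧸ (q.colon Set.univ).radical)) Q := by
  set p := (q.colon Set.univ).radical
  have : p.IsPrime := hq.isPrime_radical_colon
  have hpQ : p.map (algebraMap R S) ≤ Q := by
    refine Ideal.map_le_iff_le_comap.2 fun a ⟨n, ha⟩ => h.1.mem_of_pow_mem n ?_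
    refine h.annihilator_le (Module.mem_annihilator.2 fun z => ?_)
    rw [← map_pow, algebraMap_smul]
    rw [← annihilator_quotient] at ha
    exact Module.mem_annihilator.1 (Module.annihilator_le_annihilator_tensorProduct M _ ha) z
  set Y := torsionBySet R (L ⧸ q) (p : Set R)
  have hY : IsStrongKrullPrime S (M ⊗[R] Y) Q := by
    refine h.of_torsionBySet_le_range (f := lTensor S M Y.subtype)
      (Module.Flat.lTensor_preserves_injective_linearMap _ Y.injective_subtype)
      (Ideal.FG.map (IsNoetherian.noetherian p) _) hpQ fun z hz => ?_
    refine Module.Flat.torsionBySet_le_range_lTensor M _ (IsNoetherian.noetherian p)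
      ((mem_torsionBySet_iff _ _).2 fun a => ?_)
    rw [← algebraMap_smul S]
    exact (mem_torsionBySet_iff _ _).1 hz ⟨_, Ideal.mem_map_of_mem _ a.2⟩
  have := hq.isTorsionFree_torsionBySet_quotient
  have : Module.Finite (R ⧸ p) Y := Module.Finite.of_restrictScalars_finite R _ _
  obtain ⟨n, θ, hθ⟩ := Module.exists_injective_pi_of_isTorsionFree (D := R ⧸ p) (V := Y)
  exact (hY.exists_tensor_of_injective_pi M (g := θ.restrictScalars R) hθ).choose_spec

end

theorem stmt_15 {R S : Type*} [CommRing R] [CommRing S] [Algebra R S] [IsNoetherianRing R]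
    (L : Type*) [AddCommGroup L] [Module R L] [Module.Finite R L]
    (M : Type*) [AddCommGroup M] [Module S M] [Module R M] [IsScalarTower R S M]
    [Module.Flat R M] (Q : Ideal S) :
    IsStrongKrullPrime S (M ⊗[R] L) Q ↔
      ∃ p ∈ associatedPrimes R L,
        IsStrongKrullPrime S (M ⧸ (p.map (algebraMap R S) • (⊤ : Submodule S M))) Q := by
  classical
  constructor
  · intro h
    obtain ⟨t, ht⟩ :=
      Submodule.IsLasker.exists_isMinimalPrimaryDecomposition (Submodule.isLasker R L) ⊥
    have hinj : Function.Injective (LinearMap.pi fun q : t => (q : Submodule R L).mkQ) := by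
      rw [← LinearMap.ker_eq_bot, LinearMap.ker_pi, ← ht.inf_eq]
      simp [Finset.inf_eq_iInf, iInf_subtype']
    obtain ⟨⟨q, hqt⟩, hq⟩ := h.exists_tensor_of_injective_pi M hinj
    exact ⟨_, ht.mem_associatedPrimes hqt, (hq.tensor_quotient_radical_colon M
      (ht.primary hqt)).of_injective (TensorProduct.tensorQuotEquivQuotMapSMul M _).injective⟩
  · rintro ⟨p, hp, h⟩
    obtain ⟨-, f, hf⟩ := (isAssociatedPrime_iff_exists_injective_linearMap p L).1 hp
    have h' := h.of_injective (TensorProduct.tensorQuotEquivQuotMapSMul M p).symm.injective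
    exact h'.of_injective (f := TensorProduct.AlgebraTensorModule.lTensor S M f)
      (Module.Flat.lTensor_preserves_injective_linearMap f hf)
end

section
/- Let R be a commutative ring, L a finitely presented R-module, and M an R-module. Then sK_R(Hom_R(L,M)) = Supp_R(L) ∩ sK_R(M). -/
/-!
Forward direction: a map `φ : L → M` is determined by its values on finitely many generators, so
`Ann φ` is a finite intersection of annihilators of elements of `M`, and since `p` is prime one of
them lies in `p`. Taking `I = 0` gives `Ann L ⊆ Ann φ ⊆ p`, i.e. `p ∈ Supp L`.

Backward direction: for `p ∈ Supp L` we have `κ(p) ⊗ L ≠ 0`, hence a nonzero map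
`L → κ(p) = Frac(R/p)`, and clearing denominators a nonzero `ψ : L → R/p`. Lift `ψ` along a
presentation `π : Rⁿ → L` to `g : Rⁿ → R`; then `g (ker π) ⊆ p`, and `ker π` is finitely generated.
An element `z` with `I + g (ker π) ⊆ Ann z ⊆ p` makes `w ↦ g w • z` descend to `φ : L → M`, with
`I ⊆ Ann z ⊆ Ann φ ⊆ Ann (g w₀ • z) ⊆ p` for any `w₀` with `g w₀ ∉ p`.
-/

open TensorProduct

section

open Ideal Module

variable {R L M : Type*} [CommRing R] [AddCommGroup L] [Module R L] [AddCommGroup M] [Module R M]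

theorem LinearMap.exists_comp_eq_of_surjective {F : Type*} [AddCommGroup F] [Module R F]
    {π : F →ₗ[R] L} (hπ : Function.Surjective π) {Φ : F →ₗ[R] M} (h : ker π ≤ ker Φ) :
    ∃ φ : L →ₗ[R] M, φ ∘ₗ π = Φ :=
  ⟨(ker π).liftQ Φ h ∘ₗ (π.quotKerEquivOfSurjective hπ).symm.toLinearMap, by
    ext x
    simp⟩

theorem Ideal.torsionOf_le_torsionOf_apply (φ : L →ₗ[R] M) (x : L) :
    torsionOf R (L →ₗ[R] M) φ ≤ torsionOf R M (φ x) := fun r hr => by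
  rw [mem_torsionOf_iff] at hr ⊢
  rw [← LinearMap.smul_apply, hr, LinearMap.zero_apply]

theorem Ideal.torsionOf_smul_le {p : Ideal R} [p.IsPrime] {z : M} (hz : torsionOf R M z ≤ p)
    {a : R} (ha : a ∉ p) : torsionOf R M (a • z) ≤ p := fun r hr => by
  rw [mem_torsionOf_iff, smul_smul] at hr
  exact (Ideal.IsPrime.mem_or_mem ‹_› (hz hr)).resolve_right ha

theorem Ideal.IsPrime.exists_torsionOf_apply_le [Module.Finite R L] {p : Ideal R} (hp : p.IsPrime)
    {φ : L →ₗ[R] M} (h : torsionOf R (L →ₗ[R] M) φ ≤ p) :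
    ∃ x, torsionOf R M (φ x) ≤ p := by
  obtain ⟨s, hs⟩ := Module.Finite.fg_top (R := R) (M := L)
  have hinf : s.inf (fun x => torsionOf R M (φ x)) ≤ torsionOf R (L →ₗ[R] M) φ := fun r hr => by
    simp only [Submodule.mem_finsetInf, mem_torsionOf_iff] at hr
    exact LinearMap.ext_on hs fun x hx => hr x hx
  obtain ⟨x, -, hx⟩ := hp.inf_le'.mp (hinf.trans h)
  exact ⟨x, hx⟩

theorem Module.annihilator_le_annihilator_linearMap :
    annihilator R L ≤ annihilator R (L →ₗ[R] M) := fun r hr => by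
  rw [mem_annihilator] at hr ⊢
  intro φ
  ext x
  rw [LinearMap.smul_apply, ← map_smul, hr, map_zero, LinearMap.zero_apply]

theorem Module.nontrivial_linearMap_of_isFractionRing (D K : Type*) [CommRing D] [Field K]
    [Algebra R D] [Algebra D K] [Algebra R K] [IsScalarTower R D K] [IsFractionRing D K]
    [Module.Finite R L] [Nontrivial (L →ₗ[R] K)] : Nontrivial (L →ₗ[R] D) := by
  obtain ⟨ψ, hψ⟩ := exists_ne (0 : L →ₗ[R] K)
  obtain ⟨s, hs⟩ := Module.Finite.fg_top (R := R) (M := L)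
  obtain ⟨d, hd⟩ := IsLocalization.exist_integer_multiples (nonZeroDivisors D) s ψ
  let i : D →ₗ[R] K := (Algebra.linearMap D K).restrictScalars R
  have hi : Function.Injective i := IsFractionRing.injective D K
  let χ : L →ₗ[R] K := (d : D) • ψ
  have hχ : LinearMap.range χ ≤ LinearMap.range i := by
    rw [LinearMap.range_eq_map, ← hs, Submodule.map_span_le]
    exact hd
  let ψ' : L →ₗ[R] D :=
    (LinearEquiv.ofInjective i hi).symm ∘ₗ Submodule.inclusion hχ ∘ₗ χ.rangeRestrict
  have hiψ' : ∀ x, i (ψ' x) = χ x := fun x => by simp [ψ']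
  refine ⟨ψ', 0, fun h0 => hψ (LinearMap.ext fun x => ?_)⟩
  have hdψ : algebraMap D K d * ψ x = 0 := by
    rw [← Algebra.smul_def, ← LinearMap.smul_apply, ← hiψ', h0, LinearMap.zero_apply, map_zero]
  exact (mul_eq_zero.mp hdψ).resolve_left (IsLocalization.map_units K d).ne_zero

theorem Module.exists_linearMap_quotient_ne_zero_of_mem_support [Module.Finite R L]
    {p : PrimeSpectrum R} (hp : p ∈ support R L) : ∃ ψ : L →ₗ[R] R ⧸ p.asIdeal, ψ ≠ 0 := by
  rw [mem_support_iff_nontrivial_residueField_tensorProduct] at hp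
  have : Nontrivial (L →ₗ[R] p.asIdeal.ResidueField) :=
    (LinearMap.liftBaseChangeEquiv p.asIdeal.ResidueField).toEquiv.nontrivial
  have := nontrivial_linearMap_of_isFractionRing (R := R) (L := L) (R ⧸ p.asIdeal) p.asIdeal.ResidueField
  exact exists_ne 0

namespace IsStrongKrullPrime

variable {p : Ideal R}

theorem annihilator_le_s17 (h : IsStrongKrullPrime R M p) : annihilator R M ≤ p := by
  obtain ⟨z, -, hz⟩ := h.2 ⊥ Submodule.fg_bot bot_le
  exact fun r hr => hz (mem_annihilator.mp hr z)

theorem mem_support_of_linearMap [Module.Finite R L] {p : PrimeSpectrum R}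
    (h : IsStrongKrullPrime R (L →ₗ[R] M) p.asIdeal) : p ∈ support R L :=
  mem_support_iff_of_finite.mpr (annihilator_le_annihilator_linearMap.trans h.annihilator_le_s17)

theorem of_linearMap [Module.Finite R L] (h : IsStrongKrullPrime R (L →ₗ[R] M) p) :
    IsStrongKrullPrime R M p := by
  refine ⟨h.1, fun I hI hIp => ?_⟩
  obtain ⟨φ, hIφ, hφp⟩ := h.2 I hI hIp
  obtain ⟨x, hx⟩ := h.1.exists_torsionOf_apply_le hφp
  exact ⟨φ x, hIφ.trans (torsionOf_le_torsionOf_apply φ x), hx⟩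

theorem linearMap (h : IsStrongKrullPrime R M p) [Module.FinitePresentation R L]
    {ψ : L →ₗ[R] R ⧸ p} (hψ : ψ ≠ 0) : IsStrongKrullPrime R (L →ₗ[R] M) p := by
  have := h.1
  refine ⟨h.1, fun I hI hIp => ?_⟩
  obtain ⟨n, π, hπ⟩ := Module.Finite.exists_fin' R L
  obtain ⟨g, hg⟩ := projective_lifting_property p.mkQ (ψ ∘ₗ π) p.mkQ_surjective
  have hgπ : ∀ w, p.mkQ (g w) = ψ (π w) := fun w => LinearMap.congr_fun hg w
  have hker : (LinearMap.ker π).map g ≤ p := Submodule.map_le_iff_le_comap.mpr fun w hw => by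
    rw [Submodule.mem_comap, ← Submodule.Quotient.mk_eq_zero, ← Submodule.mkQ_apply, hgπ,
      LinearMap.mem_ker.mp hw, map_zero]
  obtain ⟨w₀, hw₀⟩ : ∃ w₀, g w₀ ∉ p := by
    obtain ⟨y, hy⟩ := not_forall.mp fun h => hψ (LinearMap.ext h)
    obtain ⟨w₀, rfl⟩ := hπ y
    refine ⟨w₀, fun hw => hy ?_⟩
    rw [← hgπ, Submodule.mkQ_apply, (Submodule.Quotient.mk_eq_zero p).mpr hw,
      LinearMap.zero_apply]
  obtain ⟨z, hJz, hzp⟩ := h.2 (I ⊔ (LinearMap.ker π).map g)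
    (Submodule.FG.sup hI ((Module.FinitePresentation.fg_ker π hπ).map g)) (sup_le hIp hker)
  obtain ⟨φ, hφ⟩ : ∃ φ : L →ₗ[R] M, φ ∘ₗ π = LinearMap.toSpanSingleton R M z ∘ₗ g :=
    LinearMap.exists_comp_eq_of_surjective hπ fun w hw =>
      hJz (Submodule.mem_sup_right (Submodule.mem_map_of_mem hw))
  have hzφ : torsionOf R M z ≤ torsionOf R (L →ₗ[R] M) φ := fun r hr => by
    rw [mem_torsionOf_iff] at hr ⊢
    refine (LinearMap.cancel_right hπ).mp (LinearMap.ext fun w => ?_)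
    rw [LinearMap.comp_apply, LinearMap.smul_apply, ← LinearMap.comp_apply φ π, hφ,
      LinearMap.comp_apply, LinearMap.toSpanSingleton_apply, smul_comm, hr, smul_zero,
      LinearMap.zero_comp, LinearMap.zero_apply]
  refine ⟨φ, (le_sup_left.trans hJz).trans hzφ, ?_⟩
  calc torsionOf R (L →ₗ[R] M) φ ≤ torsionOf R M (φ (π w₀)) := torsionOf_le_torsionOf_apply φ _
    _ = torsionOf R M (g w₀ • z) := by rw [← LinearMap.comp_apply, hφ]; rfl
    _ ≤ p := torsionOf_smul_le hzp hw₀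

end IsStrongKrullPrime

end

theorem stmt_17 {R : Type*} [CommRing R]
    (L : Type*) [AddCommGroup L] [Module R L] [Module.FinitePresentation R L]
    (M : Type*) [AddCommGroup M] [Module R M] (p : PrimeSpectrum R) :
    IsStrongKrullPrime R (L →ₗ[R] M) p.asIdeal ↔
      p ∈ Module.support R L ∧ IsStrongKrullPrime R M p.asIdeal := by
  refine ⟨fun h => ⟨h.mem_support_of_linearMap, h.of_linearMap⟩, fun ⟨hL, hM⟩ => ?_⟩
  obtain ⟨ψ, hψ⟩ := Module.exists_linearMap_quotient_ne_zero_of_mem_support hL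
  exact hM.linearMap hψ
end

section
/- Let (R,m) be a commutative local ring and M an R-module with m ∈ sK_R(M). Then for every nonzero finitely presented R-module L, Hom_R(L,M) ≠ 0. -/
open TensorProduct

/-!
A nonzero finitely presented module `L` has a nonzero cyclic quotient `R ⧸ I` with `I` finitely
generated: drop generators from a finite generating set until one more drop would generate too
little, and use that quotients of `L` by finitely generated submodules stay finitely presented.
Then `I` lies in the maximal ideal, so the strong Krull property gives `z ≠ 0` in `M` killed by
`I`, and `L ↠ R ⧸ I → M`, `1 ↦ z`, is a nonzero homomorphism.
-/

open Submodule

lemma Module.Finite.exists_fg_sup_span_singleton_eq_top (R L : Type*) [Semiring R]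
    [AddCommMonoid L] [Module R L] [Module.Finite R L] [Nontrivial L] :
    ∃ N : Submodule R L, N.FG ∧ ∃ y : L, y ∉ N ∧ N ⊔ span R {y} = ⊤ := by
  classical
  obtain ⟨s, hs⟩ := Module.Finite.fg_top (R := R) (M := L)
  induction s using Finset.induction with
  | empty => simp at hs
  | @insert y s _ ih =>
    by_cases hspan : span R (s : Set L) = ⊤
    · exact ih hspan
    refine ⟨span R s, fg_span s.finite_toSet, y, fun hy => hspan ?_, ?_⟩
    · rwa [Finset.coe_insert, span_insert_eq_span hy] at hs
    · rwa [Finset.coe_insert, span_insert, sup_comm] at hs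

lemma Module.FinitePresentation.exists_fg_ideal_surjective_quotient (R L : Type*) [CommRing R]
    [AddCommGroup L] [Module R L] [Module.FinitePresentation R L] [Nontrivial L] :
    ∃ I : Ideal R, I.FG ∧ I ≠ ⊤ ∧ ∃ f : L →ₗ[R] R ⧸ I, Function.Surjective f := by
  obtain ⟨N, hN, y, hyN, hNy⟩ := Module.Finite.exists_fg_sup_span_singleton_eq_top R L
  have : Module.FinitePresentation R (L ⧸ N) :=
    Module.finitePresentation_of_surjective N.mkQ N.mkQ_surjective (by rwa [ker_mkQ])
  let g := LinearMap.toSpanSingleton R (L ⧸ N) (N.mkQ y)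
  have hg : Function.Surjective g := by
    have hspan : span R {N.mkQ y} = ⊤ := by
      rw [← Set.image_singleton, ← map_span, map_mkQ_eq_top, hNy]
    rw [← LinearMap.range_eq_top, ← LinearMap.span_singleton_eq_range, hspan]
  refine ⟨LinearMap.ker g, Module.FinitePresentation.fg_ker g hg, fun htop => hyN ?_,
    (g.quotKerEquivOfSurjective hg).symm.toLinearMap ∘ₗ N.mkQ, ?_⟩
  · simpa [g, Quotient.mk_eq_zero] using (htop ▸ mem_top : (1 : R) ∈ LinearMap.ker g)
  · rw [LinearMap.coe_comp]
    exact (LinearEquiv.surjective _).comp N.mkQ_surjective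

lemma IsStrongKrullPrime.exists_ne_zero_le_ker {R M : Type*} [CommRing R] [AddCommGroup M]
    [Module R M] {p I : Ideal R} (hp : IsStrongKrullPrime R M p) (hI : I.FG) (hIp : I ≤ p) :
    ∃ z : M, z ≠ 0 ∧ I ≤ LinearMap.ker (LinearMap.toSpanSingleton R M z) := by
  obtain ⟨z, hIz, hzp⟩ := hp.2 I hI hIp
  refine ⟨z, fun hz => hp.1.ne_top ((Ideal.eq_top_iff_one p).2 (hzp ?_)), hIz⟩
  simp [hz]

theorem stmt_18 {R : Type*} [CommRing R] [IsLocalRing R]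
    {M : Type*} [AddCommGroup M] [Module R M]
    (h : IsStrongKrullPrime R M (IsLocalRing.maximalIdeal R))
    (L : Type*) [AddCommGroup L] [Module R L] [Module.FinitePresentation R L] [Nontrivial L] :
    ∃ f : L →ₗ[R] M, f ≠ 0 := by
  obtain ⟨I, hI, hItop, f, hf⟩ := Module.FinitePresentation.exists_fg_ideal_surjective_quotient R L
  obtain ⟨z, hz, hIz⟩ := h.exists_ne_zero_le_ker hI (IsLocalRing.le_maximalIdeal hItop)
  refine ⟨I.liftQ (LinearMap.toSpanSingleton R M z) hIz ∘ₗ f, fun hzero => hz ?_⟩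
  obtain ⟨x, hx⟩ := hf (Submodule.Quotient.mk (1 : R))
  have := LinearMap.congr_fun hzero x
  rwa [LinearMap.comp_apply, hx, liftQ_apply, LinearMap.toSpanSingleton_apply, one_smul] at this
end
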